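/- arXiv:2211.16454 — 5 statements merged into one kernel-verified Lean document; each statement's English description precedes it below -/
import Mathlib

section
/- Let n be a positive integer and p ∈ (0,1] with n·p ≥ 2 and p ≤ 1/3. Then for every k ∈ {0,1,…,n}, the probability that a Binomial(n,p) random variable equals k is at most e⁴/√(n·p). -/
/-!
Let `m` be a mode of `b(·; n, p)`; comparing `b(m - 1)` with `b(m)` gives `m ≤ (n + 1) p`. Put
`T = ⌊√(np)⌋ ≥ 1`. For `m ≤ j < m + T` the ratio `b(j + 1) / b(j) = (n - j) p / ((j + 1)(1 - p))`
is at least `1 / (1 + 4 / T) ≥ exp (-4 / T)`, because `(j + 1)(1 - p) - (n - j) p ≤ T` while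
`(n - j) p ≥ (2np - T) / 3 ≥ T² / 4`. Hence the `T + 1` probabilities `b(m), …, b(m + T)` are all
at least `e⁻⁴ b(m)`; as they sum to at most `1`, `b(m) ≤ e⁴ / (T + 1) < e⁴ / √(np)`.
-/

open Finset Real

noncomputable def binomTerm (n : ℕ) (p : ℝ) (j : ℕ) : ℝ :=
  n.choose j * p ^ j * (1 - p) ^ (n - j)

section Window

variable {f : ℕ → ℝ} {m T : ℕ}

theorem pow_mul_le_of_forall_mul_le_succ {a : ℝ} (ha : 0 ≤ a)
    (hstep : ∀ j, m ≤ j → j < m + T → a * f j ≤ f (j + 1)) :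
    ∀ t ≤ T, a ^ t * f m ≤ f (m + t) := by
  intro t
  induction t with
  | zero => simp
  | succ t ih =>
    intro ht
    calc a ^ (t + 1) * f m = a * (a ^ t * f m) := by ring
      _ ≤ a * f (m + t) := mul_le_mul_of_nonneg_left (ih (by omega)) ha
      _ ≤ f (m + (t + 1)) := hstep (m + t) (by omega) (by omega)

theorem le_exp_div_of_exp_neg_mul_le {c : ℝ} (hc : 0 ≤ c)
    (hsum : ∑ j ∈ Icc m (m + T), f j ≤ 1)
    (hstep : ∀ j, m ≤ j → j < m + T → exp (-(c / T)) * f j ≤ f (j + 1)) :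
    f m ≤ exp c / (T + 1) := by
  rcases le_or_gt (f m) 0 with hfm | hfm
  · exact hfm.trans (by positivity)
  have hlower : ∀ j ∈ Icc m (m + T), exp (-c) * f m ≤ f j := by
    intro j hj
    obtain ⟨hmj, hjT⟩ := mem_Icc.mp hj
    obtain ⟨t, rfl⟩ : ∃ t, j = m + t := ⟨j - m, by omega⟩
    have htT : t ≤ T := by omega
    refine le_trans ?_ (pow_mul_le_of_forall_mul_le_succ (exp_pos _).le hstep t htT)
    refine mul_le_mul_of_nonneg_right ?_ hfm.le
    rw [← exp_nat_mul, exp_le_exp]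
    have htT' : (t : ℝ) / T ≤ 1 := div_le_one_of_le₀ (by exact_mod_cast htT) T.cast_nonneg
    calc -c ≤ -(c * (t / T)) := neg_le_neg (mul_le_of_le_one_right hc htT')
      _ = t * (-(c / T)) := by ring
  have hcard : ((T : ℝ) + 1) * (exp (-c) * f m) ≤ 1 := by
    have := (card_nsmul_le_sum _ _ _ hlower).trans hsum
    rwa [Nat.card_Icc, nsmul_eq_mul, show m + T + 1 - m = T + 1 by omega, Nat.cast_succ] at this
  rw [le_div_iff₀ (by positivity)]
  calc f m * (T + 1) = exp c * ((T + 1) * (exp (-c) * f m)) := by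
        rw [exp_neg]; field_simp
    _ ≤ exp c := mul_le_of_le_one_right (exp_pos c).le hcard

end Window

section Binomial

variable {n : ℕ} {p : ℝ}

theorem binomTerm_nonneg (hp0 : 0 ≤ p) (hp1 : p ≤ 1) (j : ℕ) : 0 ≤ binomTerm n p j := by
  unfold binomTerm
  have : 0 ≤ 1 - p := by linarith
  positivity

theorem binomTerm_self (n : ℕ) (p : ℝ) : binomTerm n p n = p ^ n := by
  simp [binomTerm]

theorem sum_range_binomTerm (n : ℕ) (p : ℝ) : ∑ j ∈ range (n + 1), binomTerm n p j = 1 := by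
  calc ∑ j ∈ range (n + 1), binomTerm n p j
      = (p + (1 - p)) ^ n := by rw [add_pow]; exact sum_congr rfl fun j _ => by unfold binomTerm; ring
    _ = 1 := by simp

theorem succ_mul_one_sub_mul_binomTerm_succ {j : ℕ} (hj : j < n) :
    (j + 1) * (1 - p) * binomTerm n p (j + 1) = (n - j) * p * binomTerm n p j := by
  have hchoose : (n.choose (j + 1) : ℝ) * (j + 1) = n.choose j * (n - j) := by
    have := congrArg (Nat.cast : ℕ → ℝ) (Nat.choose_succ_right_eq n j)
    push_cast [Nat.cast_sub hj.le] at this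
    exact this
  obtain ⟨a, ha⟩ : ∃ a, n - j = a + 1 := ⟨n - j - 1, by omega⟩
  have ha' : n - (j + 1) = a := by omega
  simp only [binomTerm, ha, ha', pow_succ]
  linear_combination (p ^ j * p * (1 - p) ^ a * (1 - p)) * hchoose

theorem le_succ_mul_of_forall_binomTerm_le (hp : 0 < p) {m : ℕ} (hm : m ∈ range (n + 1))
    (hmax : ∀ j ∈ range (n + 1), binomTerm n p j ≤ binomTerm n p m) :
    (m : ℝ) ≤ (n + 1) * p := by
  obtain rfl | ⟨j, rfl⟩ : m = 0 ∨ ∃ j, m = j + 1 := by cases m <;> simp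
  · simp only [Nat.cast_zero]; positivity
  have hjn : j < n := by simp at hm; omega
  have hpos : 0 < binomTerm n p (j + 1) :=
    (pow_pos hp n).trans_le (binomTerm_self n p ▸ hmax n (by simp))
  have hle : binomTerm n p j ≤ binomTerm n p (j + 1) := hmax j (by simp; omega)
  have hnj : (0 : ℝ) ≤ n - j := by rw [sub_nonneg]; exact_mod_cast hjn.le
  have : (j + 1) * (1 - p) * binomTerm n p (j + 1) ≤ (n - j) * p * binomTerm n p (j + 1) := by
    rw [succ_mul_one_sub_mul_binomTerm_succ hjn]; gcongr
  have := le_of_mul_le_mul_right this hpos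
  push_cast
  linarith

theorem succ_mul_one_sub_le_exp_mul {x T : ℝ} (hp0 : 0 ≤ p) (hp3 : p ≤ 1 / 3) (hT : 1 ≤ T)
    (hTs : T ^ 2 ≤ n * p) (hx : x + 1 ≤ (n + 1) * p + T) :
    (x + 1) * (1 - p) ≤ exp (4 / T) * ((n - x) * p) := by
  have hgap : (x + 1) * (1 - p) ≤ (n - x) * p + T := by linarith
  have hlarge : T ^ 2 ≤ 4 * ((n - x) * p) := by nlinarith
  have hT4 : T ≤ 4 / T * ((n - x) * p) := by
    rw [div_mul_eq_mul_div, le_div_iff₀ (by linarith)]; nlinarith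
  calc (x + 1) * (1 - p) ≤ (1 + 4 / T) * ((n - x) * p) := by linarith
    _ ≤ exp (4 / T) * ((n - x) * p) := by
      gcongr
      · nlinarith
      · linarith [add_one_le_exp (4 / T)]

theorem exp_neg_mul_binomTerm_le_succ (hp0 : 0 ≤ p) (hp3 : p ≤ 1 / 3) {j T : ℕ} (hT : 1 ≤ T)
    (hTs : (T : ℝ) ^ 2 ≤ n * p) (hj : (j : ℝ) + 1 ≤ (n + 1) * p + T) (hjn : j < n) :
    exp (-(4 / T)) * binomTerm n p j ≤ binomTerm n p (j + 1) := by
  have hq : 0 < ((j : ℝ) + 1) * (1 - p) := by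
    have : 0 < 1 - p := by linarith
    positivity
  have hratio := succ_mul_one_sub_le_exp_mul hp0 hp3 (by exact_mod_cast hT) hTs hj
  refine le_of_mul_le_mul_left ?_ hq
  calc ((j : ℝ) + 1) * (1 - p) * (exp (-(4 / T)) * binomTerm n p j)
      = exp (-(4 / T)) * (((j : ℝ) + 1) * (1 - p)) * binomTerm n p j := by ring
    _ ≤ exp (-(4 / T)) * (exp (4 / T) * ((n - j) * p)) * binomTerm n p j := by
      gcongr
      exact binomTerm_nonneg hp0 (by linarith) j
    _ = ((j : ℝ) + 1) * (1 - p) * binomTerm n p (j + 1) := by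
      rw [succ_mul_one_sub_mul_binomTerm_succ hjn, ← mul_assoc, ← exp_add]; simp

end Binomial

theorem binomial_prob_le_general
    (n : ℕ) (p : ℝ) (hp0 : 0 < p)
    (hnp : 2 ≤ (n : ℝ) * p) (hp3 : p ≤ 1 / 3)
    (k : ℕ) (hk : k ≤ n) :
    (n.choose k : ℝ) * p ^ k * (1 - p) ^ (n - k) ≤ Real.exp 4 / Real.sqrt ((n : ℝ) * p) := by
  obtain ⟨m, hm, hmax⟩ := exists_max_image (range (n + 1)) (binomTerm n p) ⟨0, by simp⟩
  have hmode := le_succ_mul_of_forall_binomTerm_le hp0 hm hmax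
  set T := ⌊√((n : ℝ) * p)⌋₊
  have hσ : √((n : ℝ) * p) < T + 1 := Nat.lt_floor_add_one _
  have hTs : (T : ℝ) ^ 2 ≤ n * p := by
    have := Nat.floor_le (sqrt_nonneg ((n : ℝ) * p))
    calc (T : ℝ) ^ 2 ≤ √((n : ℝ) * p) ^ 2 := by gcongr
      _ = n * p := sq_sqrt (by linarith)
  have hT : 1 ≤ T := Nat.le_floor (by rw [Nat.cast_one, one_le_sqrt]; linarith)
  have hwindow : m + T ≤ n := by
    have : (T : ℝ) ≤ T ^ 2 := by nlinarith [(Nat.one_le_cast (α := ℝ)).mpr hT]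
    have : 3 * ((n : ℝ) * p) ≤ n := by nlinarith
    exact_mod_cast (show (m : ℝ) + T ≤ n by linarith)
  have hsum : ∑ j ∈ Icc m (m + T), binomTerm n p j ≤ 1 := by
    refine le_trans ?_ (sum_range_binomTerm n p).le
    exact sum_le_sum_of_subset_of_nonneg (fun j hj => by simp at hj ⊢; omega)
      fun j _ _ => binomTerm_nonneg hp0.le (by linarith) j
  have hpeak := le_exp_div_of_exp_neg_mul_le (by norm_num) hsum fun j _ hj =>
    exp_neg_mul_binomTerm_le_succ hp0.le hp3 hT hTs
      (by linarith [show (j : ℝ) + 1 ≤ m + T by exact_mod_cast hj]) (by omega)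
  calc (n.choose k : ℝ) * p ^ k * (1 - p) ^ (n - k) = binomTerm n p k := rfl
    _ ≤ binomTerm n p m := hmax k (by simp; omega)
    _ ≤ exp 4 / (T + 1) := hpeak
    _ ≤ exp 4 / √((n : ℝ) * p) := by gcongr

/-- If `n p ≥ 2` and `p ≤ 1/3` (with `p ∈ (0,1]`), then every binomial
probability `b(k; n, p) = C(n,k) p^k (1-p)^{n-k}` is at most `e⁴ / √(n p)`. -/
theorem binomial_prob_le
    (n : ℕ) (p : ℝ) (hp0 : 0 < p) (hp1 : p ≤ 1)
    (hnp : 2 ≤ (n : ℝ) * p) (hp3 : p ≤ 1 / 3)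
    (k : ℕ) (hk : k ≤ n) :
    (n.choose k : ℝ) * p ^ k * (1 - p) ^ (n - k) ≤ Real.exp 4 / Real.sqrt ((n : ℝ) * p) :=
  binomial_prob_le_general n p hp0 hnp hp3 k hk
end

section
/- Let X, Y ~ Binomial(n,p) be independent, where n·p ≥ 2 and p ≤ 1/3. Then for any real a ≥ 0, P(|X − Y| ≤ a) ≤ (2a+1)·e⁴/√(n·p). -/
/-!
Let `b j = C(n, j) pʲ (1 - p)ⁿ⁻ʲ` and let `m` be a mode. From `b (m + 1) ≤ b m` one gets
`(n - m) p ≤ (m + 1)(1 - p)`, so `np ≤ m + 1`, and for `p ≤ 1/3` the ratio `b (j + 1) / b j` is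
at most `(m + 1 + L/2) / (m + 1 - L)` whenever `m - L ≤ j < m`. For `L = ⌊√(np)⌋` the `L`-th power
of this ratio is at most `e⁴`, so each of the `L + 1` terms `b (m - L), …, b m` is at least
`e⁻⁴ b m`; as they sum to at most `1`, every `b t ≤ b m ≤ e⁴ / (L + 1) ≤ e⁴ / √(np)`.

For independent `X`, `Y`, `P(X - Y = k) = ∑ y, P(X = y + k) P(Y = y) ≤ maxₓ P(X = x)`, and
`|X - Y| ≤ a` is the union of the `2⌊a⌋ + 1` events `X - Y = k` with `|k| ≤ ⌊a⌋`.
-/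

open MeasureTheory ProbabilityTheory
open scoped NNReal ENNReal

/-- The binomial distribution with `n` trials and success probability `p`, as a measure
on `ℕ`. -/
noncomputable def binomialMeasure (n : ℕ) (p : ℝ≥0) (h : p ≤ 1) : Measure ℕ :=
  ((PMF.binomial p h n).toMeasure).map Fin.val

open Finset Real

theorem le_pow_mul_of_succ_le {R : Type*} [Semiring R] [PartialOrder R] [IsOrderedRing R]
    {f : ℕ → R} {r : R} {lo hi : ℕ} (hr : 0 ≤ r)
    (hf : ∀ j, lo ≤ j → j < hi → f (j + 1) ≤ r * f j) :
    ∀ j, lo ≤ j → j ≤ hi → f hi ≤ r ^ (hi - j) * f j := by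
  intro j hlo hhi
  induction hhi using Nat.decreasingInduction with
  | self => simp
  | of_succ j hj ih =>
    calc f hi ≤ r ^ (hi - (j + 1)) * f (j + 1) := ih (by omega)
      _ ≤ r ^ (hi - (j + 1)) * (r * f j) := by gcongr; exact hf j hlo hj
      _ = r ^ (hi - j) * f j := by
        rw [← mul_assoc, ← pow_succ, show hi - (j + 1) + 1 = hi - j by omega]

theorem lt_and_pow_div_sub_le_exp_four {L : ℕ} {S : ℝ} (hL : 1 ≤ L) (hLS : (L : ℝ) ^ 2 ≤ S)
    (hS : 2 ≤ S) : (L : ℝ) < S ∧ ((S + L / 2) / (S - L)) ^ L ≤ exp 4 := by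
  have hL' : (1 : ℝ) ≤ L := by exact_mod_cast hL
  -- for `L = 1` use `S ≥ 2`, for `L ≥ 2` use `8 L ≤ 4 L²` and `L² ≤ S`
  have key : 3 * (L : ℝ) ^ 2 + 8 * L ≤ 8 * S := by
    rcases hL.eq_or_lt with h | h
    · subst h; norm_num; linarith
    · have : (2 : ℝ) ≤ L := by exact_mod_cast h
      nlinarith
  have hpos : 0 < S - L := by nlinarith
  refine ⟨by linarith, ?_⟩
  calc ((S + L / 2) / (S - L)) ^ L = (3 / 2 * L / (S - L) + 1) ^ L := by
        congr 1; field_simp; ring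
    _ ≤ exp (3 / 2 * L / (S - L)) ^ L := by
        gcongr
        exact add_one_le_exp _
    _ = exp (3 / 2 * L ^ 2 / (S - L)) := by rw [← exp_nat_mul]; congr 1; ring
    _ ≤ exp 4 := by
        gcongr
        rw [div_le_iff₀ hpos]; linarith

noncomputable def binomProb (n : ℕ) (p : ℝ) (j : ℕ) : ℝ :=
  n.choose j * p ^ j * (1 - p) ^ (n - j)

namespace binomProb

variable {n : ℕ} {p : ℝ}

theorem nonneg (hp0 : 0 ≤ p) (hp1 : p ≤ 1) (j : ℕ) : 0 ≤ binomProb n p j := by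
  have := sub_nonneg.2 hp1
  unfold binomProb
  positivity

theorem sum_range_succ_eq_one : ∑ j ∈ range (n + 1), binomProb n p j = 1 := by
  have h := (add_pow p (1 - p) n).symm
  rw [add_sub_cancel, one_pow] at h
  rw [← h]
  exact sum_congr rfl fun j _ => by unfold binomProb; ring

theorem succ_mul {j : ℕ} (hj : j < n) :
    binomProb n p (j + 1) * ((j + 1) * (1 - p)) = binomProb n p j * ((n - j) * p) := by
  have hchoose : (n.choose (j + 1) : ℝ) * (j + 1) = n.choose j * (n - j) := by
    have := congrArg (Nat.cast : ℕ → ℝ) (Nat.choose_succ_right_eq n j)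
    push_cast [Nat.cast_sub hj.le] at this
    exact this
  unfold binomProb
  rw [show n - j = n - (j + 1) + 1 by omega]
  linear_combination p ^ (j + 1) * (1 - p) ^ (n - (j + 1) + 1) * hchoose

theorem pos (hp0 : 0 < p) (hp1 : p < 1) {j : ℕ} (hj : j ≤ n) : 0 < binomProb n p j := by
  have := sub_pos.2 hp1
  have : (0 : ℝ) < n.choose j := by exact_mod_cast Nat.choose_pos hj
  unfold binomProb
  positivity

theorem sub_mul_le_of_succ_le (hp0 : 0 < p) (hp1 : p < 1) {m : ℕ} (hm : m ≤ n)
    (hmax : binomProb n p (m + 1) ≤ binomProb n p m) : (n - m) * p ≤ (m + 1) * (1 - p) := by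
  rcases hm.eq_or_lt with rfl | hm
  · simp only [sub_self, zero_mul]
    nlinarith
  · have hb := pos hp0 hp1 hm.le
    refine le_of_mul_le_mul_left ?_ hb
    rw [← succ_mul hm]
    gcongr

theorem succ_le_mul_of_sub_mul_le (hp0 : 0 ≤ p) (hp : 2 * p ≤ 1 - p) {m L j : ℕ}
    (hmode : (n - m) * p ≤ (m + 1) * (1 - p)) (hm : m ≤ n) (hLm : (L : ℝ) < m + 1)
    (hj : j < m) (hjL : m - j ≤ L) :
    binomProb n p (j + 1) ≤ (m + 1 + L / 2) / (m + 1 - L) * binomProb n p j := by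
  have hb := nonneg (n := n) hp0 (by linarith) j
  have hb' := nonneg (n := n) hp0 (by linarith) (j + 1)
  obtain ⟨k, rfl⟩ : ∃ k, m = j + k := ⟨m - j, by omega⟩
  have hkL : (k : ℝ) ≤ L := by exact_mod_cast (by omega : k ≤ L)
  push_cast at hmode hLm ⊢
  have hid := succ_mul (n := n) (p := p) (j := j) (by omega)
  -- `(n - j) p = (n - m) p + k p ≤ (m + 1)(1 - p) + k (1 - p) / 2`
  have hratio : binomProb n p (j + 1) * (j + 1) ≤ binomProb n p j * (j + k + 1 + k / 2) := by
    refine le_of_mul_le_mul_right ?_ (by linarith : 0 < 1 - p)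
    calc _ = binomProb n p j * ((n - j) * p) := by rw [← hid]; ring
      _ ≤ binomProb n p j * ((j + k + 1 + k / 2) * (1 - p)) :=
          mul_le_mul_of_nonneg_left (by nlinarith) hb
      _ = _ := by ring
  rw [div_mul_eq_mul_div, le_div_iff₀ (by linarith)]
  nlinarith

theorem exists_mode (hp0 : 0 ≤ p) (hp1 : p ≤ 1) :
    ∃ m ≤ n, ∀ j, binomProb n p j ≤ binomProb n p m := by
  obtain ⟨m, hm, hmax⟩ := exists_max_image (range (n + 1)) (binomProb n p) ⟨0, by simp⟩
  refine ⟨m, mem_range_succ_iff.1 hm, fun j => ?_⟩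
  rcases le_or_gt j n with hj | hj
  · exact hmax j (mem_range_succ_iff.2 hj)
  · rw [show binomProb n p j = 0 by simp [binomProb, Nat.choose_eq_zero_of_lt hj]]
    exact nonneg hp0 hp1 m

theorem add_one_mul_le_exp_four (hp0 : 0 ≤ p) (hp3 : p ≤ 1 / 3) {m L : ℕ} (hm : m ≤ n)
    (hmode : (n - m) * p ≤ (m + 1) * (1 - p)) (hL1 : 1 ≤ L) (hL2 : (L : ℝ) ^ 2 ≤ m + 1)
    (hm1 : (2 : ℝ) ≤ m + 1) : (L + 1) * binomProb n p m ≤ exp 4 := by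
  have hb := nonneg (n := n) hp0 (by linarith)
  obtain ⟨hLm, hpow⟩ := lt_and_pow_div_sub_le_exp_four hL1 hL2 hm1
  have hLm' : L ≤ m := by exact_mod_cast Nat.lt_add_one_iff.1 (by exact_mod_cast hLm)
  have hchain : ∀ j ∈ Icc (m - L) m, binomProb n p m ≤ exp 4 * binomProb n p j := by
    intro j hj
    rw [mem_Icc] at hj
    have hr : 1 ≤ (m + 1 + L / 2 : ℝ) / (m + 1 - L) := by
      rw [one_le_div (by linarith)]
      linarith [Nat.cast_nonneg (α := ℝ) L]
    calc binomProb n p m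
        ≤ ((m + 1 + L / 2 : ℝ) / (m + 1 - L)) ^ (m - j) * binomProb n p j :=
          le_pow_mul_of_succ_le (by linarith) (fun i _ him =>
            succ_le_mul_of_sub_mul_le hp0 (by linarith) hmode hm hLm him (by omega)) j hj.1 hj.2
      _ ≤ ((m + 1 + L / 2 : ℝ) / (m + 1 - L)) ^ L * binomProb n p j := by
          gcongr
          · exact hb j
          · omega
      _ ≤ exp 4 * binomProb n p j := by gcongr; exact hb j
  calc (L + 1) * binomProb n p m = ∑ j ∈ Icc (m - L) m, binomProb n p m := by
        rw [sum_const, Nat.card_Icc, nsmul_eq_mul, show m + 1 - (m - L) = L + 1 by omega]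
        push_cast
        ring
    _ ≤ ∑ j ∈ Icc (m - L) m, exp 4 * binomProb n p j := sum_le_sum hchain
    _ ≤ ∑ j ∈ range (n + 1), exp 4 * binomProb n p j :=
        sum_le_sum_of_subset_of_nonneg (fun j hj => by rw [mem_Icc] at hj; rw [mem_range]; omega)
          fun j _ _ => mul_nonneg (exp_pos 4).le (hb j)
    _ = exp 4 := by rw [← mul_sum, sum_range_succ_eq_one, mul_one]

theorem le_exp_four_div_sqrt (hp0 : 0 < p) (hp3 : p ≤ 1 / 3) (hnp : 2 ≤ n * p) (t : ℕ) :
    binomProb n p t ≤ exp 4 / √(n * p) := by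
  obtain ⟨m, hm, hmax⟩ := exists_mode (n := n) hp0.le (by linarith)
  have hmode := sub_mul_le_of_succ_le hp0 (by linarith) hm (hmax (m + 1))
  have hnpm : n * p ≤ m + 1 := by nlinarith
  set L := ⌊√(n * p)⌋₊
  have hL1 : 1 ≤ L := Nat.le_floor (by rw [Nat.cast_one, one_le_sqrt]; linarith)
  have hL2 : (L : ℝ) ^ 2 ≤ m + 1 :=
    (pow_le_pow_left₀ (Nat.cast_nonneg _) (Nat.floor_le (sqrt_nonneg _)) 2).trans
      ((sq_sqrt (by linarith)).trans_le hnpm)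
  have hsum := add_one_mul_le_exp_four hp0.le hp3 hm hmode hL1 hL2 (by linarith)
  calc binomProb n p t ≤ binomProb n p m := hmax t
    _ ≤ exp 4 / (L + 1) := by rw [le_div_iff₀ (by positivity)]; linarith
    _ ≤ exp 4 / √(n * p) := by gcongr; exact (Nat.lt_floor_add_one _).le

end binomProb

section

variable {Ω G : Type*} [MeasurableSpace Ω] {μ : Measure Ω} [IsProbabilityMeasure μ]

theorem measure_sub_eq_le_of_indepFun [AddGroup G] [Countable G] [MeasurableSpace G]
    [MeasurableSingletonClass G] {X Y : Ω → G} (hXY : IndepFun X Y μ) (hY : AEMeasurable Y μ)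
    {M : ℝ≥0∞} (hX : ∀ x, μ (X ⁻¹' {x}) ≤ M) (g : G) :
    μ {ω | X ω - Y ω = g} ≤ M := by
  have hsub : {ω | X ω - Y ω = g} ⊆ ⋃ y, X ⁻¹' {g + y} ∩ Y ⁻¹' {y} := fun ω hω => by
    simp only [Set.mem_iUnion, Set.mem_inter_iff, Set.mem_preimage, Set.mem_singleton_iff]
    exact ⟨Y ω, by rw [← hω.out, sub_add_cancel], rfl⟩
  have hY1 : ∑' y, μ (Y ⁻¹' {y}) = 1 := by
    simp_rw [← Measure.map_apply_of_aemeasurable hY (measurableSet_singleton _)]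
    have := Measure.isProbabilityMeasure_map (μ := μ) hY
    simpa using (μ.map Y).tsum_indicator_apply_singleton Set.univ MeasurableSet.univ
  calc μ {ω | X ω - Y ω = g} ≤ ∑' y, μ (X ⁻¹' {g + y} ∩ Y ⁻¹' {y}) :=
        (measure_mono hsub).trans (measure_iUnion_le _)
    _ = ∑' y, μ (X ⁻¹' {g + y}) * μ (Y ⁻¹' {y}) := tsum_congr fun y =>
        hXY.measure_inter_preimage_eq_mul _ _ (measurableSet_singleton _)
          (measurableSet_singleton _)
    _ ≤ ∑' y, M * μ (Y ⁻¹' {y}) := by gcongr with y; exact hX _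
    _ = M := by rw [ENNReal.tsum_mul_left, hY1, mul_one]

theorem measure_abs_sub_le_le_of_indepFun {X Y : Ω → ℤ} (hXY : IndepFun X Y μ)
    (hY : AEMeasurable Y μ) {M : ℝ≥0∞} (hX : ∀ x, μ (X ⁻¹' {x}) ≤ M) (N : ℕ) :
    μ {ω | |X ω - Y ω| ≤ N} ≤ (2 * N + 1) * M := by
  have hsub : {ω | |X ω - Y ω| ≤ N} ⊆ ⋃ k ∈ Icc (-(N : ℤ)) N, {ω | X ω - Y ω = k} :=
    fun ω hω => by
      simp only [Set.mem_iUnion, Set.mem_ofPred_eq, mem_Icc, exists_prop, exists_eq_right']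
      exact abs_le.1 hω.out
  calc μ {ω | |X ω - Y ω| ≤ N} ≤ ∑ k ∈ Icc (-(N : ℤ)) N, μ {ω | X ω - Y ω = k} :=
        (measure_mono hsub).trans (measure_biUnion_finset_le _ _)
    _ ≤ ∑ _k ∈ Icc (-(N : ℤ)) N, M := sum_le_sum fun k _ =>
        measure_sub_eq_le_of_indepFun hXY hY hX k
    _ = (2 * N + 1) * M := by
        rw [sum_const, Int.card_Icc, nsmul_eq_mul,
          show (N + 1 - -N : ℤ).toNat = 2 * N + 1 by omega]
        push_cast
        rfl

theorem toReal_measure_abs_sub_le_le_of_indepFun {X Y : Ω → ℕ} (hXY : IndepFun X Y μ)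
    (hY : AEMeasurable Y μ) {M : ℝ} (hM : 0 ≤ M) (hX : ∀ k, μ (X ⁻¹' {k}) ≤ ENNReal.ofReal M)
    {a : ℝ} (ha : 0 ≤ a) : (μ {ω | |(X ω : ℝ) - Y ω| ≤ a}).toReal ≤ (2 * a + 1) * M := by
  have hXℤ (z : ℤ) : μ ((fun ω => (X ω : ℤ)) ⁻¹' {z}) ≤ ENNReal.ofReal M :=
    (measure_mono fun ω (hω : (X ω : ℤ) = z) => show X ω = z.toNat by omega).trans (hX _)
  have hwindow := measure_abs_sub_le_le_of_indepFun
    (hXY.comp (φ := ((↑) : ℕ → ℤ)) (ψ := ((↑) : ℕ → ℤ)) .of_discrete .of_discrete)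
    (Measurable.of_discrete.comp_aemeasurable hY) hXℤ ⌊a⌋₊
  have hsub : {ω | |(X ω : ℝ) - Y ω| ≤ a} ⊆ {ω | |(X ω : ℤ) - Y ω| ≤ ⌊a⌋₊} :=
    fun ω (hω : |(X ω : ℝ) - Y ω| ≤ a) => by
      show |(X ω : ℤ) - Y ω| ≤ ⌊a⌋₊
      rw [Int.natCast_floor_eq_floor ha, Int.le_floor]
      push_cast
      exact hω
  calc (μ {ω | |(X ω : ℝ) - Y ω| ≤ a}).toReal ≤ (2 * ⌊a⌋₊ + 1) * M := by
        refine ENNReal.toReal_le_of_le_ofReal (by positivity) ((measure_mono hsub).trans ?_)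
        refine hwindow.trans_eq ?_
        rw [ENNReal.ofReal_mul (by positivity)]
        norm_cast
    _ ≤ (2 * a + 1) * M := by gcongr; exact Nat.floor_le ha

end

instance isProbabilityMeasure_binomialMeasure (n : ℕ) (p : ℝ≥0) (h : p ≤ 1) :
    IsProbabilityMeasure (binomialMeasure n p h) :=
  Measure.isProbabilityMeasure_map (by fun_prop)

theorem binomialMeasure_singleton (n : ℕ) {p : ℝ≥0} (h : p ≤ 1) (k : ℕ) :
    binomialMeasure n p h {k} = ENNReal.ofReal (binomProb n p k) := by
  rw [binomialMeasure, Measure.map_apply (by fun_prop) (measurableSet_singleton k)]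
  rcases le_or_gt k n with hk | hk
  · have : Fin.val ⁻¹' {k} = {Fin.ofNat (n + 1) k} := by
      ext i
      simp [Fin.ext_iff, Nat.mod_eq_of_lt (Nat.lt_succ_of_le hk), eq_comm]
    rw [this, PMF.toMeasure_apply_singleton _ _ (measurableSet_singleton _),
      ← PMF.binomial_apply_of_le hk, binomProb]
  · have : Fin.val ⁻¹' {k} = (∅ : Set (Fin (n + 1))) := by
      ext i
      simp only [Set.mem_preimage, Set.mem_singleton_iff, Set.mem_empty_iff_false, iff_false]
      omega
    simp [this, binomProb, Nat.choose_eq_zero_of_lt hk]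

/-- Let `X, Y ~ Binomial(n,p)` be independent, where `n p ≥ 2` and
`p ≤ 1/3`. Then for any real `a ≥ 0`, `P(|X − Y| ≤ a) ≤ (2a+1) e⁴ / √(n p)`. -/
theorem indep_binomials_close_prob_le
    (n : ℕ) (p : ℝ≥0) (hp1 : p ≤ 1)
    (hnp : 2 ≤ (n : ℝ) * (p : ℝ)) (hp3 : (p : ℝ) ≤ 1 / 3)
    {Ω : Type*} [MeasurableSpace Ω] (μ : Measure Ω) [IsProbabilityMeasure μ]
    (X Y : Ω → ℕ)
    (hX : Measure.map X μ = binomialMeasure n p hp1)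
    (hY : Measure.map Y μ = binomialMeasure n p hp1)
    (hXY : IndepFun X Y μ)
    (a : ℝ) (ha : 0 ≤ a) :
    (μ {ω | |(X ω : ℝ) - (Y ω : ℝ)| ≤ a}).toReal
      ≤ (2 * a + 1) * Real.exp 4 / Real.sqrt ((n : ℝ) * (p : ℝ)) := by
  have hp0 : 0 < (p : ℝ) := pos_of_mul_pos_right (by linarith) (Nat.cast_nonneg n)
  have hXae : AEMeasurable X μ := .of_map_ne_zero (hX ▸ IsProbabilityMeasure.ne_zero _)
  have hYae : AEMeasurable Y μ := .of_map_ne_zero (hY ▸ IsProbabilityMeasure.ne_zero _)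
  have hatom (k : ℕ) : μ (X ⁻¹' {k}) ≤ ENNReal.ofReal (exp 4 / √(n * p)) := by
    rw [← Measure.map_apply_of_aemeasurable hXae (measurableSet_singleton k), hX,
      binomialMeasure_singleton]
    exact ENNReal.ofReal_le_ofReal (binomProb.le_exp_four_div_sqrt hp0 hp3 hnp k)
  rw [mul_div_assoc]
  exact toReal_measure_abs_sub_le_le_of_indepFun hXY hYae (by positivity) hatom ha
end

section
/- Fix δ > 0 and a constant ε* ∈ (0,1), and let (1+δ)·log(n)/n ≤ p_n = o(n^{−5/6}). Let G ~ G(n, p_n) and fix distinct vertices u, v ∈ [n]. Define the events: E1 = {every pair of distinct vertices of G has at most 2 common neighbors}; E2 = {every vertex degree lies in [ε*·n·p_n, e·n·p_n]}; with S = {u,v} ∪ N(u) ∪ N(v), E4(u,v) = {every vertex outside S has at most 4 neighbors in N(u) ∪ N(v), and at most 5 vertices outside S have at least 2 neighbors in N(u) ∪ N(v)}. Then P(E4(u,v)^c ∩ E1 ∩ E2) = o(n^{−2}), uniformly over the choice of u and v. -/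
open MeasureTheory Filter Asymptotics
open scoped NNReal ENNReal

/-- The Erdős–Rényi measure on edge-indicator functions: each potential edge (element of
`Sym2 (Fin n)`) is present independently with probability `p` (capped at 1). -/
noncomputable def erMeasure (n : ℕ) (p : ℝ≥0) : Measure (Sym2 (Fin n) → Bool) :=
  Measure.pi fun _ => (PMF.bernoulli (min p 1) (min_le_right _ _)).toMeasure

/-- The simple graph on `Fin n` determined by an edge-indicator function. -/
def graphOfFn {n : ℕ} (ω : Sym2 (Fin n) → Bool) : SimpleGraph (Fin n) where
  Adj u v := u ≠ v ∧ ω s(u, v) = true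
  symm := ⟨fun u v h => ⟨h.1.symm, by rw [Sym2.eq_swap]; exact h.2⟩⟩
  loopless := ⟨fun u h => h.1 rfl⟩

/-- The set of vertices at graph distance at most `r` from `v`. -/
def ball {V : Type*} (G : SimpleGraph V) (v : V) (r : ℕ) : Set V :=
  {w | ∃ p : G.Walk v w, p.length ≤ r}

/-- There is a graph isomorphism between the `r`-neighborhoods of `u` and of `v`
(induced subgraphs on the balls of radius `r`) mapping `u` to `v`. -/
def RootedIso {V : Type*} (G : SimpleGraph V) (r : ℕ) (u v : V) : Prop :=
  ∃ φ : G.induce (ball G u r) ≃g G.induce (ball G v r),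
    (φ ⟨u, ⟨SimpleGraph.Walk.nil, Nat.zero_le r⟩⟩ : V) = v

/-- The degree of a vertex. -/
noncomputable def deg {V : Type*} (G : SimpleGraph V) (v : V) : ℕ := (G.neighborSet v).ncard

/-- Event `E1`: every pair of distinct vertices has at most 2 common neighbors. -/
def eventE1 {n : ℕ} (G : SimpleGraph (Fin n)) : Prop :=
  ∀ w x : Fin n, w ≠ x → (G.neighborSet w ∩ G.neighborSet x).ncard ≤ 2

/-- Event `E2`: every vertex degree lies in `[ε*·n·p, e·n·p]`. -/
def eventE2 {n : ℕ} (εs pr : ℝ) (G : SimpleGraph (Fin n)) : Prop :=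
  ∀ i : Fin n,
    εs * ((n : ℝ) * pr) ≤ (deg G i : ℝ) ∧ (deg G i : ℝ) ≤ Real.exp 1 * ((n : ℝ) * pr)

/-- The set `S = {u,v} ∪ N(u) ∪ N(v)`. -/
def bigS {n : ℕ} (G : SimpleGraph (Fin n)) (u v : Fin n) : Set (Fin n) :=
  {u, v} ∪ G.neighborSet u ∪ G.neighborSet v

/-- Event `E4(u,v)`: every vertex outside `S` has at most 4 neighbors in `N(u) ∪ N(v)`,
and at most 5 vertices outside `S` have at least 2 neighbors in `N(u) ∪ N(v)`. -/
def eventE4 {n : ℕ} (G : SimpleGraph (Fin n)) (u v : Fin n) : Prop :=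
  (∀ w : Fin n, w ∉ bigS G u v →
      (G.neighborSet w ∩ (G.neighborSet u ∪ G.neighborSet v)).ncard ≤ 4) ∧
  {w : Fin n | w ∉ bigS G u v ∧
      2 ≤ (G.neighborSet w ∩ (G.neighborSet u ∪ G.neighborSet v)).ncard}.ncard ≤ 5

/-!
On `E1` a vertex `w ∉ S` has at most `2 + 2` neighbours in `N(u) ∪ N(v)`, so on `E1` the event
`E4(u,v)` fails only if six vertices `w₁, …, w₆ ∉ S` each have two neighbours `cᵢ₁ ≠ cᵢ₂` in
`N(u) ∪ N(v)`. Such a configuration consists of twelve distinct edges `wᵢcᵢⱼ` together with,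
disjoint from them, a "spoke" joining each `cᵢⱼ` to `u` or `v`. A union bound over
configurations bounds the probability by `n⁶ p¹² ∑ p^#spokes ≤ n⁶ p¹² (24 + 2np)¹²`: a spoke that
is new costs a factor `2np`, while a repeated one has at most `24` choices. Since
`p = o(n^(-5/6))`, this is `O(n⁶p¹² + n¹⁸p²⁴) = o(n⁻²)`.
-/

open Finset

section ImageCount

variable {ι B β : Type*} [Fintype B] [DecidableEq β] (ψ : B → β) {c : ℕ}
  (hc : ∀ b, #{x | ψ x = b} ≤ c) (q : ℝ≥0∞)
include hc

lemma sum_pow_card_insert_le (T : Finset β) :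
    ∑ x, q ^ #(insert (ψ x) T) ≤ (c * #T + Fintype.card B * q) * q ^ #T := by
  rw [← sum_filter_add_sum_filter_not univ (fun x => ψ x ∈ T)]
  have hin : #{x | ψ x ∈ T} ≤ c * #T :=
    card_le_mul_card_image_of_maps_to (fun x hx => (mem_filter.1 hx).2) c fun b _ =>
      (card_le_card fun x hx => by grind).trans (hc b)
  calc ∑ x with ψ x ∈ T, q ^ #(insert (ψ x) T) + ∑ x with ψ x ∉ T, q ^ #(insert (ψ x) T)
      = #{x | ψ x ∈ T} * q ^ #T + ∑ x with ψ x ∉ T, q * q ^ #T := by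
        rw [sum_congr rfl fun x hx => by rw [insert_eq_of_mem (mem_filter.1 hx).2],
          sum_const, nsmul_eq_mul]
        congr 1
        refine sum_congr rfl fun x hx => ?_
        rw [card_insert_of_notMem (mem_filter.1 hx).2, pow_succ']
    _ ≤ (c * #T : ℕ) * q ^ #T + ∑ _x, q * q ^ #T :=
        add_le_add (mul_le_mul_left (by exact_mod_cast hin) _)
          (sum_le_sum_of_subset (filter_subset _ _))
    _ = (c * #T + Fintype.card B * q) * q ^ #T := by
        rw [sum_const, card_univ, nsmul_eq_mul, Nat.cast_mul, add_mul, mul_assoc _ q]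

lemma sum_pow_card_image_fin_le (k : ℕ) :
    ∑ g : Fin k → B, q ^ #(univ.image (ψ ∘ g)) ≤ (c * k + Fintype.card B * q) ^ k := by
  induction k with
  | zero => simp
  | succ k ih =>
    have hcons (x : B) (g : Fin k → B) :
        univ.image (ψ ∘ Fin.cons x g) = insert (ψ x) (univ.image (ψ ∘ g)) := by
      rw [Fin.comp_cons]
      apply coe_injective
      push_cast [coe_image, coe_univ, Set.image_univ]
      exact Fin.range_cons _ _
    calc ∑ g : Fin (k + 1) → B, q ^ #(univ.image (ψ ∘ g))
        = ∑ g : Fin k → B, ∑ x, q ^ #(insert (ψ x) (univ.image (ψ ∘ g))) := by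
          rw [← (Fin.consEquiv fun _ => B).sum_comp, Fintype.sum_prod_type, sum_comm]
          exact sum_congr rfl fun g _ => sum_congr rfl fun x _ => by rw [← hcons]; rfl
      _ ≤ ∑ g : Fin k → B,
            (c * (k + 1) + Fintype.card B * q) * q ^ #(univ.image (ψ ∘ g)) := by
          refine sum_le_sum fun g _ => (sum_pow_card_insert_le ψ hc q _).trans ?_
          gcongr
          exact_mod_cast card_image_le.trans (by simp)
      _ ≤ (c * ↑(k + 1) + Fintype.card B * q) ^ (k + 1) := by
          rw [← mul_sum, pow_succ', Nat.cast_succ]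
          gcongr
          exact ih.trans (by gcongr; simp)

lemma sum_pow_card_image_le [Fintype ι] [DecidableEq ι] :
    ∑ g : ι → B, q ^ #(univ.image (ψ ∘ g)) ≤
      (c * Fintype.card ι + Fintype.card B * q) ^ Fintype.card ι := by
  let e : (Fin (Fintype.card ι) → B) ≃ (ι → B) :=
    (Fintype.equivFin ι).symm.arrowCongr (.refl B)
  rw [← e.sum_comp]
  refine le_of_eq_of_le (sum_congr rfl fun g _ => ?_) (sum_pow_card_image_fin_le ψ hc q _)
  congr 2
  change univ.image (ψ ∘ g ∘ Fintype.equivFin ι) = _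
  rw [← Function.comp_assoc, ← image_image, image_univ_equiv]

end ImageCount

lemma erMeasure_forall_eq_true (n : ℕ) (p : ℝ≥0) (E : Finset (Sym2 (Fin n))) :
    erMeasure n p {ω | ∀ e ∈ E, ω e = true} = ((min p 1 : ℝ≥0) : ℝ≥0∞) ^ #E := by
  change erMeasure n p ((E : Set _).pi fun _ => {true}) = _
  rw [erMeasure, Measure.pi_pi_finset, prod_const,
    PMF.toMeasure_apply_singleton _ _ (measurableSet_singleton _)]
  rfl

lemma erMeasure_forall_eq_true_le (n : ℕ) (p : ℝ≥0) (E : Finset (Sym2 (Fin n))) :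
    erMeasure n p {ω | ∀ e ∈ E, ω e = true} ≤ (p : ℝ≥0∞) ^ #E := by
  rw [erMeasure_forall_eq_true]
  gcongr
  exact min_le_left _ _

def spoke {V : Type*} (u v : V) (x : V × Bool) : Sym2 V := s(x.1, cond x.2 u v)

lemma card_filter_spoke_eq_le_two {V : Type*} [Fintype V] [DecidableEq V] (u v : V) (e : Sym2 V) :
    #{x | spoke u v x = e} ≤ 2 := by
  refine (card_le_card_of_injOn Prod.snd (fun _ _ => mem_univ _) ?_).trans_eq Fintype.card_bool
  rintro ⟨x, b⟩ hx ⟨y, b'⟩ hy (rfl : b = b')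
  have hxy := (mem_filter.1 hx).2.trans (mem_filter.1 hy).2.symm
  rw [spoke, spoke, Sym2.congr_left] at hxy
  exact Prod.ext hxy rfl

def spokeEdges {V ι : Type*} [DecidableEq V] [Fintype ι] (u v : V) (σ : ι → V × Bool) :
    Finset (Sym2 V) :=
  univ.image (spoke u v ∘ σ)

lemma sum_pow_card_spokeEdges_le {V ι : Type*} [Fintype V] [DecidableEq V] [Fintype ι]
    [DecidableEq ι] (u v : V) (q : ℝ≥0∞) :
    ∑ σ : ι → V × Bool, q ^ #(spokeEdges u v σ) ≤
      (2 * Fintype.card ι + 2 * Fintype.card V * q) ^ Fintype.card ι := by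
  refine (sum_pow_card_image_le _ (card_filter_spoke_eq_le_two u v) q).trans_eq ?_
  rw [Fintype.card_prod, Fintype.card_bool]
  push_cast
  ring

section WitnessEdges

variable {V ι κ : Type*} [DecidableEq V] [Fintype ι] [Fintype κ] (u v : V) (w : ι → V)
  (σ : ι × κ → V × Bool)

def outerEdges : Finset (Sym2 V) := univ.image fun ij => s(w ij.1, (σ ij).1)

variable {u v w σ}

lemma card_outerEdges (hw : Function.Injective w)
    (hσ : ∀ i, Function.Injective fun j => (σ (i, j)).1) (hwσ : ∀ i ij, w i ≠ (σ ij).1) :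
    #(outerEdges w σ) = Fintype.card ι * Fintype.card κ := by
  rw [outerEdges, card_image_of_injective, card_univ, Fintype.card_prod]
  rintro ⟨i, j⟩ ⟨i', j'⟩ h
  rcases Sym2.eq_iff.1 h with ⟨hii', hjj'⟩ | ⟨hij', -⟩
  · obtain rfl := hw hii'
    rw [hσ i hjj']
  · exact absurd hij' (hwσ i _)

lemma disjoint_outerEdges_spokeEdges (hwσ : ∀ i ij, w i ≠ (σ ij).1) (hwu : ∀ i, w i ≠ u)
    (hwv : ∀ i, w i ≠ v) : Disjoint (outerEdges w σ) (spokeEdges u v σ) := by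
  simp only [outerEdges, spokeEdges, disjoint_left, mem_image, mem_univ, true_and,
    Function.comp_apply, not_exists]
  rintro _ ⟨⟨i, j⟩, rfl⟩ ij h
  have hmem : w i ∈ spoke u v (σ ij) := h ▸ Sym2.mem_mk_left _ _
  rcases Sym2.mem_iff.1 hmem with h' | h'
  · exact hwσ i ij h'
  · revert h'
    cases (σ ij).2
    exacts [hwv i, hwu i]

end WitnessEdges

lemma exists_injective_fin_mem_of_le_ncard {α : Type*} {s : Set α} [Finite s] {k : ℕ}
    (h : k ≤ s.ncard) : ∃ f : Fin k → α, Function.Injective f ∧ ∀ i, f i ∈ s := by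
  have := Fintype.ofFinite s
  obtain ⟨e⟩ : Nonempty (Fin k ↪ s) := by
    rwa [Function.Embedding.nonempty_iff_card_le, Fintype.card_fin, ← Nat.card_eq_fintype_card,
      Nat.card_coe_set_eq]
  exact ⟨(↑) ∘ e, Subtype.val_injective.comp e.injective, fun i => (e i).2⟩

section Graph

variable {n : ℕ} {G : SimpleGraph (Fin n)} {u v : Fin n}

lemma ncard_neighborSet_inter_le_four (h1 : eventE1 G) {w : Fin n} (hwu : w ≠ u) (hwv : w ≠ v) :
    (G.neighborSet w ∩ (G.neighborSet u ∪ G.neighborSet v)).ncard ≤ 4 := by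
  rw [Set.inter_union_distrib_left]
  exact (Set.ncard_union_le _ _).trans (add_le_add (h1 w u hwu) (h1 w v hwv))

lemma six_le_ncard_of_not_eventE4 (h4 : ¬ eventE4 G u v) (h1 : eventE1 G) :
    6 ≤ {w | w ∉ bigS G u v ∧
      2 ≤ (G.neighborSet w ∩ (G.neighborSet u ∪ G.neighborSet v)).ncard}.ncard := by
  by_contra! h
  refine h4 ⟨fun w hw => ncard_neighborSet_inter_le_four h1 ?_ ?_, by omega⟩ <;>
    rintro rfl <;> simp [bigS] at hw

lemma exists_witness_of_not_eventE4 (h4 : ¬ eventE4 G u v) (h1 : eventE1 G) :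
    ∃ (w : Fin 6 → Fin n) (σ : Fin 6 × Fin 2 → Fin n × Bool),
      #(outerEdges w σ) = 12 ∧ Disjoint (outerEdges w σ) (spokeEdges u v σ) ∧
      ∀ e ∈ outerEdges w σ ∪ spokeEdges u v σ, e ∈ G.edgeSet := by
  obtain ⟨w, hw, hwT⟩ :=
    exists_injective_fin_mem_of_le_ncard (six_le_ncard_of_not_eventE4 h4 h1)
  choose c hc hcN using fun i => exists_injective_fin_mem_of_le_ncard (hwT i).2
  have hflag (i : Fin 6) (j : Fin 2) : ∃ b : Bool, G.Adj (c i j) (cond b u v) := by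
    rcases (hcN i j).2 with h | h
    exacts [⟨true, h.symm⟩, ⟨false, h.symm⟩]
  choose b hb using hflag
  have hwS i : w i ∉ bigS G u v := (hwT i).1
  have hwσ i (ij : Fin 6 × Fin 2) : w i ≠ c ij.1 ij.2 := by
    rintro h
    apply hwS i
    rcases (hcN ij.1 ij.2).2 with h' | h' <;> simp [bigS, h, h']
  refine ⟨w, fun ij => (c ij.1 ij.2, b ij.1 ij.2), card_outerEdges hw hc hwσ,
    disjoint_outerEdges_spokeEdges hwσ (fun i h => hwS i (by simp [bigS, h]))
      (fun i h => hwS i (by simp [bigS, h])), ?_⟩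
  simp only [outerEdges, spokeEdges, mem_union, mem_image, mem_univ, true_and,
    Function.comp_apply]
  rintro _ (⟨⟨i, j⟩, rfl⟩ | ⟨⟨i, j⟩, rfl⟩)
  exacts [(hcN i j).1, hb i j]

end Graph

lemma eq_true_of_mem_edgeSet_graphOfFn {n : ℕ} {ω : Sym2 (Fin n) → Bool} {e : Sym2 (Fin n)}
    (he : e ∈ (graphOfFn ω).edgeSet) : ω e = true := by
  induction e using Sym2.ind
  exact he.2

lemma erMeasure_not_eventE4_and_eventE1_le (n : ℕ) (p : ℝ≥0) (u v : Fin n) :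
    erMeasure n p {ω | ¬ eventE4 (graphOfFn ω) u v ∧ eventE1 (graphOfFn ω)} ≤
      (n : ℝ≥0∞) ^ 6 * ((p : ℝ≥0∞) ^ 12 * (24 + 2 * n * p) ^ 12) := by
  classical
  let witnessEdges (x : (Fin 6 → Fin n) × (Fin 6 × Fin 2 → Fin n × Bool)) :=
    outerEdges x.1 x.2 ∪ spokeEdges u v x.2
  let W := univ.filter fun x : (Fin 6 → Fin n) × (Fin 6 × Fin 2 → Fin n × Bool) =>
    #(outerEdges x.1 x.2) = 12 ∧ Disjoint (outerEdges x.1 x.2) (spokeEdges u v x.2)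
  have hcover : {ω | ¬ eventE4 (graphOfFn ω) u v ∧ eventE1 (graphOfFn ω)} ⊆
      ⋃ x ∈ W, {ω | ∀ e ∈ witnessEdges x, ω e = true} := by
    rintro ω ⟨h4, h1⟩
    obtain ⟨w, σ, hcard, hdisj, hedges⟩ := exists_witness_of_not_eventE4 h4 h1
    exact Set.mem_biUnion (x := (w, σ)) (mem_filter.2 ⟨mem_univ _, hcard, hdisj⟩)
      fun e he => eq_true_of_mem_edgeSet_graphOfFn (hedges e he)
  calc _ ≤ ∑ x ∈ W, erMeasure n p {ω | ∀ e ∈ witnessEdges x, ω e = true} :=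
        (measure_mono hcover).trans (measure_biUnion_finset_le _ _)
    _ ≤ ∑ x ∈ W, (p : ℝ≥0∞) ^ 12 * (p : ℝ≥0∞) ^ #(spokeEdges u v x.2) := by
        refine sum_le_sum fun x hx => (erMeasure_forall_eq_true_le n p _).trans_eq ?_
        obtain ⟨-, hcard, hdisj⟩ := mem_filter.1 hx
        rw [card_union_of_disjoint hdisj, hcard, pow_add]
    _ ≤ ∑ x : (Fin 6 → Fin n) × (Fin 6 × Fin 2 → Fin n × Bool),
          (p : ℝ≥0∞) ^ 12 * (p : ℝ≥0∞) ^ #(spokeEdges u v x.2) :=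
        sum_le_sum_of_subset (subset_univ W)
    _ = (n : ℝ≥0∞) ^ 6 * ((p : ℝ≥0∞) ^ 12 * ∑ σ : Fin 6 × Fin 2 → Fin n × Bool,
          (p : ℝ≥0∞) ^ #(spokeEdges u v σ)) := by
        rw [Fintype.sum_prod_type]
        simp [← mul_sum]
    _ ≤ (n : ℝ≥0∞) ^ 6 * ((p : ℝ≥0∞) ^ 12 * (24 + 2 * n * p) ^ 12) := by
        gcongr
        refine (sum_pow_card_spokeEdges_le u v _).trans_eq ?_
        norm_num

lemma isLittleO_natCast_pow_mul_pow {f : ℕ → ℝ} {s : ℝ}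
    (hf : f =o[atTop] fun n : ℕ => (n : ℝ) ^ s) (a : ℕ) {b : ℕ} (hb : 0 < b) :
    (fun n : ℕ => (n : ℝ) ^ a * f n ^ b) =o[atTop] fun n : ℕ => (n : ℝ) ^ (a + b * s) := by
  refine ((isBigO_refl _ _).mul_isLittleO (hf.pow hb)).congr' .rfl ?_
  filter_upwards [eventually_gt_atTop 0] with n hn
  have hn' : (0 : ℝ) < n := Nat.cast_pos.2 hn
  rw [← Real.rpow_natCast _ b, ← Real.rpow_mul hn'.le, ← Real.rpow_natCast (n : ℝ) a,
    ← Real.rpow_add hn', mul_comm s]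

lemma isBigO_natCast_rpow_of_le {r s : ℝ} (h : r ≤ s) :
    (fun n : ℕ => (n : ℝ) ^ r) =O[atTop] fun n => (n : ℝ) ^ s := by
  refine IsBigO.of_bound 1 ?_
  filter_upwards [eventually_ge_atTop 1] with n hn
  rw [one_mul, Real.norm_of_nonneg (by positivity), Real.norm_of_nonneg (by positivity)]
  exact Real.rpow_le_rpow_of_exponent_le (by exact_mod_cast hn) h

lemma isLittleO_witness_bound {f : ℕ → ℝ} (hf0 : ∀ n, 0 ≤ f n)
    (hf : f =o[atTop] fun n : ℕ => (n : ℝ) ^ (-(5 : ℝ) / 6)) :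
    (fun n : ℕ => (n : ℝ) ^ 6 * (f n ^ 12 * (24 + 2 * n * f n) ^ 12)) =o[atTop]
      fun n : ℕ => (n : ℝ) ^ (-(2 : ℝ)) := by
  have hsmall := (isLittleO_natCast_pow_mul_pow hf 6 (b := 12) (by norm_num)).trans_isBigO
    (isBigO_natCast_rpow_of_le (s := -2) (by norm_num))
  have hlarge : (fun n : ℕ => (n : ℝ) ^ 18 * f n ^ 24) =o[atTop]
      fun n : ℕ => (n : ℝ) ^ (-(2 : ℝ)) :=
    (isLittleO_natCast_pow_mul_pow hf 18 (b := 24) (by norm_num)).congr_right fun n => by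
      norm_num
  refine IsBigO.trans_isLittleO ?_ ((hsmall.const_mul_left (2 ^ 11 * 24 ^ 12)).add
    (hlarge.const_mul_left (2 ^ 23)))
  refine IsBigO.of_bound 1 (Eventually.of_forall fun n => ?_)
  have hn : (0 : ℝ) ≤ n := n.cast_nonneg
  have hf0 := hf0 n
  rw [one_mul, Real.norm_of_nonneg (by positivity), Real.norm_of_nonneg (by positivity)]
  calc (n : ℝ) ^ 6 * (f n ^ 12 * (24 + 2 * n * f n) ^ 12)
      ≤ (n : ℝ) ^ 6 * (f n ^ 12 * (2 ^ 11 * (24 ^ 12 + (2 * n * f n) ^ 12))) := by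
        gcongr
        exact add_pow_le (by norm_num) (by positivity) 12
    _ = 2 ^ 11 * 24 ^ 12 * ((n : ℝ) ^ 6 * f n ^ 12) + 2 ^ 23 * ((n : ℝ) ^ 18 * f n ^ 24) := by
        ring

theorem eventE4_complement_prob_general
    (εs : ℝ)
    (p : ℕ → ℝ≥0)
    (ho : (fun n : ℕ => (p n : ℝ)) =o[atTop] fun n : ℕ => (n : ℝ) ^ (-(5 : ℝ) / 6)) :
    ∃ g : ℕ → ℝ, (g =o[atTop] fun n : ℕ => (n : ℝ) ^ (-(2 : ℝ))) ∧
      ∀ (n : ℕ) (u v : Fin n), u ≠ v →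
        (erMeasure n (p n)
          {ω | ¬ eventE4 (graphOfFn ω) u v ∧ eventE1 (graphOfFn ω) ∧
              eventE2 εs (p n : ℝ) (graphOfFn ω)}).toReal ≤ g n := by
  refine ⟨fun n => (n : ℝ) ^ 6 * ((p n : ℝ) ^ 12 * (24 + 2 * n * p n) ^ 12),
    isLittleO_witness_bound (fun n => (p n).2) ho, fun n u v _ => ?_⟩
  refine le_of_le_of_eq (ENNReal.toReal_le_coe_of_le_coe
    (b := (n : ℝ≥0) ^ 6 * (p n ^ 12 * (24 + 2 * n * p n) ^ 12)) ?_) (by push_cast; rfl)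
  refine (measure_mono (Set.ofPred_subset_ofPred.2 fun _ => And.imp_right And.left)).trans ?_
  exact_mod_cast erMeasure_not_eventE4_and_eventE1_le n (p n) u v

/-- Fix `δ > 0` and `ε* ∈ (0,1)`, and let
`(1+δ)·log(n)/n ≤ pₙ = o(n^{−5/6})`. Then, uniformly over distinct vertices `u, v`,
`P(E4(u,v)ᶜ ∩ E1 ∩ E2) = o(n^{−2})`. -/
theorem eventE4_complement_prob
    (δ εs : ℝ) (hδ : 0 < δ) (hεs0 : 0 < εs) (hεs1 : εs < 1)
    (p : ℕ → ℝ≥0) (hp1 : ∀ n, p n ≤ 1)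
    (hlb : ∀ n : ℕ, (1 + δ) * Real.log n / n ≤ (p n : ℝ))
    (ho : (fun n : ℕ => (p n : ℝ)) =o[atTop] fun n : ℕ => (n : ℝ) ^ (-(5 : ℝ) / 6)) :
    ∃ g : ℕ → ℝ, (g =o[atTop] fun n : ℕ => (n : ℝ) ^ (-(2 : ℝ))) ∧
      ∀ (n : ℕ) (u v : Fin n), u ≠ v →
        (erMeasure n (p n)
          {ω | ¬ eventE4 (graphOfFn ω) u v ∧ eventE1 (graphOfFn ω) ∧
              eventE2 εs (p n : ℝ) (graphOfFn ω)}).toReal ≤ g n :=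
  eventE4_complement_prob_general εs p ho
end

section
/- Suppose p_n → 0 and n·p_n → ∞, and let G ~ G(n, p_n). Then for any fixed positive integer m and every k ∈ {0,…,m−1}, E[|C_G(m,k)|] = (1 ± o(1))·n/m, i.e., E[|C_G(m,k)|]/(n/m) → 1 as n → ∞. -/
open MeasureTheory Filter Asymptotics
open scoped NNReal ENNReal

/-- The color class `C_G(m,k)`: vertices whose degree is `k` mod `m`. -/
noncomputable def colorClass {V : Type*} (G : SimpleGraph V) (m k : ℕ) : Set V :=
  {v | deg G v % m = k}


open Finset

/-!
The degree of a vertex is a sum of `n - 1` independent Bernoulli(`p`) variables, so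
`E|C_G(m,k)| = n · P(Bin(n-1, p) ≡ k mod m)`. The roots-of-unity filter writes `m` times this
probability as `∑ⱼ ζ^(-jk) (1 - p + p ζ^j)^(n-1)` for a primitive `m`-th root of unity `ζ`.
The term `j = 0` is `1`. For `j ≠ 0`, `|1 - p + p ζ^j|² = 1 - 2p(1-p)(1 - Re ζ^j)`, which is at
most `exp(-p (1 - Re ζ^j))` once `p ≤ 1/2`, so the term is `O(exp(-c (n-1) p)) → 0`.
-/

theorem IsPrimitiveRoot.sum_inv_pow_mul_pow_eq_ite {K : Type*} [Field K] {ζ : K} {m k : ℕ}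
    (hζ : IsPrimitiveRoot ζ m) (hk : k < m) (d : ℕ) :
    ∑ j ∈ range m, ((ζ ^ j) ^ k)⁻¹ * (ζ ^ j) ^ d = if d % m = k then (m : K) else 0 := by
  have hζk : ζ ^ k ≠ 0 := pow_ne_zero _ (hζ.ne_zero (by omega))
  set r := (ζ ^ k)⁻¹ * ζ ^ d
  have hterm (j : ℕ) : ((ζ ^ j) ^ k)⁻¹ * (ζ ^ j) ^ d = r ^ j := by
    rw [pow_right_comm ζ j k, pow_right_comm ζ j d, ← inv_pow, ← mul_pow]
  have hr : r = 1 ↔ d % m = k := by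
    rw [inv_mul_eq_one₀ hζk, eq_comm, (hζ.isOfFinOrder (by omega)).pow_inj_mod,
      ← hζ.eq_orderOf, Nat.mod_eq_of_lt hk]
  have hrm : r ^ m = 1 := by rw [← hterm, hζ.pow_eq_one, one_pow, one_pow, inv_one, one_mul]
  simp_rw [hterm]
  split_ifs with h
  · simp [hr.2 h]
  · rw [geom_sum_eq (hr.not.2 h), hrm, sub_self, zero_div]

theorem integral_pow_card_filter_pi {ι : Type*} [Fintype ι] (μ : Measure Bool)
    [IsProbabilityMeasure μ] (S : Finset ι) (z : ℂ) :
    ∫ ω, z ^ #{i ∈ S | ω i} ∂Measure.pi (fun _ : ι => μ) =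
      (μ.real {false} + μ.real {true} * z) ^ #S := by
  classical
  have hprod (ω : ι → Bool) :
      z ^ #{i ∈ S | ω i} = ∏ i, if i ∈ S then (if ω i then z else 1) else 1 := by
    rw [prod_ite_mem, univ_inter, prod_ite, prod_const, prod_const_one, mul_one]
  have hfactor (i : ι) :
      ∫ b, (if i ∈ S then (if b then z else 1) else 1) ∂μ =
        if i ∈ S then μ.real {false} + μ.real {true} * z else 1 := by
    by_cases hi : i ∈ S
    · simp only [hi, if_true]
      rw [integral_fintype .of_finite, Fintype.sum_bool]
      simp [add_comm]
    · simp only [hi, if_false, integral_const, probReal_univ, one_smul]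
  rw [integral_congr_ae (.of_forall hprod), integral_fintype_prod_eq_prod (E := fun _ => Bool)
    (fun i b => if i ∈ S then (if b then z else 1) else 1)]
  simp_rw [hfactor, prod_ite_mem, univ_inter, prod_const]

theorem PMF.toMeasure_bernoulli_real_true (q : ℝ≥0) (hq : q ≤ 1) :
    (PMF.bernoulli q hq).toMeasure.real {true} = q := by
  simp [measureReal_def, PMF.bernoulli_apply]

theorem PMF.toMeasure_bernoulli_real_false (q : ℝ≥0) (hq : q ≤ 1) :
    (PMF.bernoulli q hq).toMeasure.real {false} = 1 - q := by
  simp [measureReal_def, PMF.bernoulli_apply, hq]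

theorem deg_graphOfFn {n : ℕ} (ω : Sym2 (Fin n) → Bool) (v : Fin n) :
    deg (graphOfFn ω) v = #{e ∈ (univ.erase v).map (Sym2.mkEmbedding v) | ω e} := by
  have : (graphOfFn ω).neighborSet v = ↑{u ∈ univ.erase v | ω s(v, u)} := by
    ext u
    simp only [SimpleGraph.mem_neighborSet, coe_filter, mem_erase, mem_univ, and_true, ne_comm]
    rfl
  rw [deg, this, Set.ncard_coe_finset, filter_map, card_map]
  rfl

theorem ncard_colorClass {V : Type*} [Fintype V] (G : SimpleGraph V) (m k : ℕ) :
    (colorClass G m k).ncard = #{v | deg G v % m = k} := by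
  rw [← Set.ncard_coe_finset]
  simp [colorClass]

theorem mul_integral_ncard_colorClass {ζ : ℂ} {m k : ℕ} (hζ : IsPrimitiveRoot ζ m)
    (hk : k < m) (n : ℕ) {p : ℝ≥0} (hp : p ≤ 1) :
    (m : ℂ) * ∫ ω, ((colorClass (graphOfFn ω) m k).ncard : ℝ) ∂erMeasure n p =
      n * ∑ j ∈ range m, ((ζ ^ j) ^ k)⁻¹ * (1 - p + p * ζ ^ j) ^ (n - 1) := by
  have hpoint (ω : Sym2 (Fin n) → Bool) :
      (m : ℂ) * ((colorClass (graphOfFn ω) m k).ncard : ℝ) =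
        ∑ v, ∑ j ∈ range m, ((ζ ^ j) ^ k)⁻¹ * (ζ ^ j) ^ deg (graphOfFn ω) v := by
    simp_rw [hζ.sum_inv_pow_mul_pow_eq_ite hk, ncard_colorClass, Complex.ofReal_natCast,
      natCast_card_filter, mul_sum, mul_ite, mul_one, mul_zero]
  have hcard (v : Fin n) : #((univ.erase v).map (Sym2.mkEmbedding v)) = n - 1 := by simp
  rw [erMeasure, ← integral_complex_ofReal, ← integral_const_mul,
    integral_congr_ae (.of_forall hpoint), integral_finsetSum _ fun _ _ => .of_finite]
  simp_rw [integral_finsetSum _ fun _ _ => Integrable.of_finite, integral_const_mul, deg_graphOfFn,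
    integral_pow_card_filter_pi, PMF.toMeasure_bernoulli_real_true,
    PMF.toMeasure_bernoulli_real_false, hcard, min_eq_left hp]
  simp

theorem Complex.re_lt_one_of_norm_eq_one {z : ℂ} (hz : ‖z‖ = 1) (hz1 : z ≠ 1) :
    z.re < 1 := by
  refine lt_of_le_of_ne (hz ▸ re_le_norm z) fun h => hz1 ?_
  have him : z.im ^ 2 = 0 := by rw [← sq_norm_sub_sq_re, hz, h, sub_self]
  exact Complex.ext h (pow_eq_zero_iff two_ne_zero |>.1 him)

theorem Complex.norm_one_sub_add_mul_sq {z : ℂ} (hz : ‖z‖ = 1) (q : ℝ) :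
    ‖1 - q + q * z‖ ^ 2 = 1 - 2 * q * (1 - q) * (1 - z.re) := by
  have hz2 : z.re * z.re + z.im * z.im = 1 := by
    rw [← normSq_apply, normSq_eq_norm_sq, hz, one_pow]
  rw [Complex.sq_norm, normSq_apply]
  simp only [add_re, add_im, sub_re, sub_im, one_re, one_im, ofReal_re, ofReal_im, mul_re, mul_im]
  linear_combination q ^ 2 * hz2

theorem Complex.norm_one_sub_add_mul_le_exp {z : ℂ} (hz : ‖z‖ = 1) {q : ℝ} (hq0 : 0 ≤ q)
    (hq : q ≤ 1 / 2) : ‖1 - q + q * z‖ ≤ Real.exp (-(q * (1 - z.re)) / 2) := by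
  have hre : 0 ≤ 1 - z.re := by linarith [hz ▸ re_le_norm z]
  have hsq : ‖1 - q + q * z‖ ^ 2 ≤ Real.exp (-(q * (1 - z.re)) / 2) ^ 2 := calc
    ‖1 - q + q * z‖ ^ 2 ≤ 1 - q * (1 - z.re) := by
      rw [norm_one_sub_add_mul_sq hz]
      nlinarith [mul_nonneg hq0 hre]
    _ ≤ Real.exp (-(q * (1 - z.re))) := by linarith [Real.add_one_le_exp (-(q * (1 - z.re)))]
    _ = Real.exp (-(q * (1 - z.re)) / 2) ^ 2 := by rw [← Real.exp_nat_mul]; ring_nf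
  exact (pow_le_pow_iff_left₀ (norm_nonneg _) (Real.exp_pos _).le two_ne_zero).1 hsq

theorem Complex.tendsto_norm_one_sub_add_mul_pow {z : ℂ} (hz : ‖z‖ = 1) (hz1 : z ≠ 1)
    {q : ℕ → ℝ} {N : ℕ → ℕ} (hq0 : ∀ n, 0 ≤ q n) (hq : Tendsto q atTop (nhds 0))
    (hNq : Tendsto (fun n => (N n : ℝ) * q n) atTop atTop) :
    Tendsto (fun n => ‖1 - q n + q n * z‖ ^ N n) atTop (nhds 0) := by
  have hc : 0 < (1 - z.re) / 2 := by linarith [re_lt_one_of_norm_eq_one hz hz1]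
  have hbound : ∀ᶠ n in atTop,
      ‖1 - q n + q n * z‖ ^ N n ≤ Real.exp (-((1 - z.re) / 2 * (N n * q n))) := by
    filter_upwards [hq.eventually (eventually_le_nhds one_half_pos)] with n hqn
    calc ‖1 - q n + q n * z‖ ^ N n ≤ Real.exp (-(q n * (1 - z.re)) / 2) ^ N n :=
          pow_le_pow_left₀ (norm_nonneg _) (norm_one_sub_add_mul_le_exp hz (hq0 n) hqn) _
      _ = Real.exp (-((1 - z.re) / 2 * (N n * q n))) := by rw [← Real.exp_nat_mul]; ring_nf
  refine squeeze_zero' (.of_forall fun n => by positivity) hbound ?_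
  exact Real.tendsto_exp_neg_atTop_nhds_zero.comp (hNq.const_mul_atTop hc)

theorem IsPrimitiveRoot.tendsto_sum_inv_pow_mul_one_sub_add_mul_pow {ζ : ℂ} {m : ℕ}
    (hζ : IsPrimitiveRoot ζ m) (hm : 0 < m) (k : ℕ) {q : ℕ → ℝ} {N : ℕ → ℕ}
    (hq0 : ∀ n, 0 ≤ q n) (hq : Tendsto q atTop (nhds 0))
    (hNq : Tendsto (fun n => (N n : ℝ) * q n) atTop atTop) :
    Tendsto (fun n => ∑ j ∈ range m, ((ζ ^ j) ^ k)⁻¹ * (1 - q n + q n * ζ ^ j) ^ N n) atTop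
      (nhds 1) := by
  have hterm (j : ℕ) (hj : j ∈ Ico 1 m) :
      Tendsto (fun n => ((ζ ^ j) ^ k)⁻¹ * (1 - q n + q n * ζ ^ j) ^ N n) atTop (nhds 0) := by
    obtain ⟨hj1, hjm⟩ := mem_Ico.1 hj
    have hζj : ‖ζ ^ j‖ = 1 := by rw [norm_pow, hζ.norm'_eq_one hm.ne', one_pow]
    rw [tendsto_zero_iff_norm_tendsto_zero]
    simpa only [norm_mul, norm_inv, norm_pow, hζj, one_pow, inv_one, one_mul] using
      Complex.tendsto_norm_one_sub_add_mul_pow hζj (hζ.pow_ne_one_of_pos_of_lt (by omega) hjm)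
        hq0 hq hNq
  have hsplit (n : ℕ) : ∑ j ∈ range m, ((ζ ^ j) ^ k)⁻¹ * (1 - q n + q n * ζ ^ j) ^ N n =
      1 + ∑ j ∈ Ico 1 m, ((ζ ^ j) ^ k)⁻¹ * (1 - q n + q n * ζ ^ j) ^ N n := by
    rw [range_eq_Ico, sum_eq_sum_Ico_succ_bot hm]
    simp
  simpa [hsplit] using tendsto_const_nhds.add (tendsto_finsetSum _ hterm)

theorem colorClass_expectation_general
    (p : ℕ → ℝ≥0)
    (hp0 : Tendsto (fun n : ℕ => (p n : ℝ)) atTop (nhds 0))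
    (hnp : Tendsto (fun n : ℕ => (n : ℝ) * (p n : ℝ)) atTop atTop)
    (m : ℕ) (k : ℕ) (hk : k < m) :
    Tendsto
      (fun n : ℕ =>
        (∫ ω, ((colorClass (graphOfFn ω) m k).ncard : ℝ) ∂(erMeasure n (p n))) /
          ((n : ℝ) / m))
      atTop (nhds 1) := by
  have hζ := Complex.isPrimitiveRoot_exp m (by omega)
  have hp_le_one : ∀ᶠ n in atTop, p n ≤ 1 := by
    filter_upwards [hp0.eventually (eventually_le_nhds one_pos)] with n hn
    exact_mod_cast hn
  have hnp' : Tendsto (fun n : ℕ => ((n - 1 : ℕ) : ℝ) * p n) atTop atTop := by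
    refine (hnp.atTop_add hp0.neg).congr' ?_
    filter_upwards [eventually_ne_atTop 0] with n hn
    rw [Nat.cast_pred (Nat.pos_of_ne_zero hn)]
    ring
  rw [← tendsto_ofReal_iff, Complex.ofReal_one]
  refine (hζ.tendsto_sum_inv_pow_mul_one_sub_add_mul_pow (by omega) k (fun n => (p n).coe_nonneg)
    hp0 hnp').congr' ?_
  filter_upwards [hp_le_one, eventually_ne_atTop 0] with n hpn hn
  rw [Complex.ofReal_div, ← mul_right_inj' (show (n : ℂ) ≠ 0 by exact_mod_cast hn),
    ← mul_integral_ncard_colorClass hζ hk n hpn]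
  push_cast
  field_simp

/-- Suppose `pₙ → 0` and `n pₙ → ∞`, and let `G ~ G(n, pₙ)`. Then for any
fixed positive integer `m` and every `k < m`, `E[|C_G(m,k)|] = (1 ± o(1)) n/m`, i.e. the
ratio of the expectation to `n/m` tends to 1. -/
theorem colorClass_expectation
    (p : ℕ → ℝ≥0) (hp1 : ∀ n, p n ≤ 1)
    (hp0 : Tendsto (fun n : ℕ => (p n : ℝ)) atTop (nhds 0))
    (hnp : Tendsto (fun n : ℕ => (n : ℝ) * (p n : ℝ)) atTop atTop)
    (m : ℕ) (hm : 0 < m) (k : ℕ) (hk : k < m) :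
    Tendsto
      (fun n : ℕ =>
        (∫ ω, ((colorClass (graphOfFn ω) m k).ncard : ℝ) ∂(erMeasure n (p n))) /
          ((n : ℝ) / m))
      atTop (nhds 1) :=
  colorClass_expectation_general p hp0 hnp m k hk
end

section
/- Let λ ∈ (0,1). For each n let G1 = G1(n) ∈ 𝒢_n(λ) be an arbitrary graph and let G2 ~ G(n, p_n), where p_n → 0 and p_n = ω(log(n)/n). Let G be the union of G1 and G2. Then, uniformly over all pairs of vertices u, v ∈ [n], the probability that N(u) \ (N(v) ∪ {v}) is empty (where N denotes neighborhoods in G) is o(n^{−2}). The same conclusion holds if G is instead the XOR of G1 and G2. -/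
open MeasureTheory Filter Asymptotics
open scoped NNReal ENNReal

/-- The XOR of two graphs: `(u,v)` is an edge iff it is an edge of exactly one of the two. -/
def sgXor {V : Type*} (A B : SimpleGraph V) : SimpleGraph V := (A \ B) ⊔ (B \ A)

/-! Let `S` be the set of vertices other than `u, v` adjacent in `G1` to neither of them. Off the
edges of `G1`, both the union and the XOR coincide with `G2`, so if `N(u) \ (N(v) ∪ {v})` is empty
then, for every `w ∈ S`, the edge `uw` of `G2` forces the edge `vw`. These events concern disjoint
pairs of edges, hence are independent, each of probability `1 - p(1 - p)`; and `|S| ≥ n - 2n^λ`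
because the closed neighbourhoods of `u` and `v` lie in their 2-balls. The probability is thus at
most `exp(-p(1 - p)(n - 2n^λ)) ≤ exp(-pn/4) ≤ n⁻³` as soon as `pn ≥ 12 log n`. -/

section ProductMeasure

variable {ι Ω : Type*} [Fintype ι] [MeasurableSpace Ω] [Countable Ω]
  [MeasurableSingletonClass Ω] (μ : Measure Ω) [IsProbabilityMeasure μ]

theorem measure_pi_inter_eq_mul_of_dependsOn (s : Set ι) {A B : Set (ι → Ω)}
    (hA : DependsOn (· ∈ A) s) (hB : DependsOn (· ∈ B) sᶜ) :
    Measure.pi (fun _ => μ) (A ∩ B)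
      = Measure.pi (fun _ => μ) A * Measure.pi (fun _ => μ) B := by
  classical
  let Φ := MeasurableEquiv.piEquivPiSubtypeProd (fun _ : ι => Ω) (· ∈ s)
  have hΦ := measurePreserving_piEquivPiSubtypeProd (fun _ : ι => μ) (· ∈ s)
  set A₁ := Prod.fst '' (Φ '' A)
  set B₂ := Prod.snd '' (Φ '' B)
  have hA₁ : A = Φ ⁻¹' (A₁ ×ˢ Set.univ) := by
    ext ω
    refine ⟨fun h => ⟨⟨_, ⟨ω, h, rfl⟩, rfl⟩, trivial⟩, ?_⟩
    rintro ⟨⟨_, ⟨ω', hω', rfl⟩, hω⟩, -⟩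
    exact (hA fun i hi => congrFun hω ⟨i, hi⟩).mp hω'
  have hB₂ : B = Φ ⁻¹' (Set.univ ×ˢ B₂) := by
    ext ω
    refine ⟨fun h => ⟨trivial, ⟨_, ⟨ω, h, rfl⟩, rfl⟩⟩, ?_⟩
    rintro ⟨-, ⟨_, ⟨ω', hω', rfl⟩, hω⟩⟩
    exact (hB fun i hi => congrFun hω ⟨i, hi⟩).mp hω'
  rw [hA₁, hB₂, ← Set.preimage_inter, Set.prod_inter_prod, Set.univ_inter, Set.inter_univ,
    hΦ.measure_preimage MeasurableSet.of_discrete.nullMeasurableSet,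
    hΦ.measure_preimage MeasurableSet.of_discrete.nullMeasurableSet,
    hΦ.measure_preimage MeasurableSet.of_discrete.nullMeasurableSet,
    Measure.prod_prod, Measure.prod_prod, Measure.prod_prod, measure_univ, measure_univ, mul_one,
    one_mul]

theorem measure_pi_biInter_eq_prod_of_dependsOn {κ : Type*} (S : Finset κ) (T : κ → Set ι)
    (hT : (S : Set κ).PairwiseDisjoint T) (E : κ → Set (ι → Ω))
    (hE : ∀ k ∈ S, DependsOn (· ∈ E k) (T k)) :
    Measure.pi (fun _ => μ) (⋂ k ∈ S, E k) = ∏ k ∈ S, Measure.pi (fun _ => μ) (E k) := by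
  classical
  induction S using Finset.induction_on with
  | empty => simp
  | insert a S ha ih =>
    have hrest : DependsOn (· ∈ ⋂ k ∈ S, E k) (T a)ᶜ := fun x y hxy => by
      simp only [Set.mem_iInter]
      refine propext <| forall₂_congr fun k hk =>
        .of_eq <| hE k (Finset.mem_insert_of_mem hk) fun i hi => hxy i ?_
      exact Set.disjoint_left.mp (hT (by simp [hk]) (by simp) (ne_of_mem_of_not_mem hk ha)) hi
    rw [Finset.set_biInter_insert, Finset.prod_insert ha,
      measure_pi_inter_eq_mul_of_dependsOn μ (T a) (hE a (Finset.mem_insert_self a S)) hrest,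
      ih (hT.subset (by simp)) fun k hk => hE k (Finset.mem_insert_of_mem hk)]

end ProductMeasure

theorem measureReal_pi_imp {ι : Type*} [Fintype ι] (ν : Measure Bool) [IsProbabilityMeasure ν]
    {i j : ι} (hij : i ≠ j) :
    (Measure.pi fun _ => ν).real {ω | ω i = true → ω j = true}
      = 1 - ν.real {true} * ν.real {false} := by
  have hcompl : {ω : ι → Bool | ω i = true → ω j = true}ᶜ
      = Function.eval i ⁻¹' ({true} : Set Bool) ∩ Function.eval j ⁻¹' ({false} : Set Bool) := by
    ext ω
    simp
  have hdep {k : ι} (b : Bool) :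
      DependsOn (fun ω : ι → Bool => ω ∈ Function.eval k ⁻¹' ({b} : Set Bool)) {k} :=
    fun x y hxy => by simp [hxy k rfl]
  have hcompl_real :
      (Measure.pi fun _ => ν).real {ω : ι → Bool | ω i = true → ω j = true}ᶜ
        = ν.real {true} * ν.real {false} := by
    rw [hcompl, measureReal_def, measure_pi_inter_eq_mul_of_dependsOn ν {i} (hdep true)
        ((hdep false).mono (by simpa using hij)),
      (measurePreserving_eval _ i).measure_preimage MeasurableSet.of_discrete.nullMeasurableSet,
      (measurePreserving_eval _ j).measure_preimage MeasurableSet.of_discrete.nullMeasurableSet,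
      ENNReal.toReal_mul, measureReal_def, measureReal_def]
  rw [← hcompl_real, probReal_compl_eq_one_sub MeasurableSet.of_discrete, sub_sub_cancel]

theorem bernoulli_toMeasure_real_true {p : ℝ≥0} (hp : p ≤ 1) :
    (PMF.bernoulli p hp).toMeasure.real {true} = p := by
  rw [measureReal_def, PMF.toMeasure_apply_singleton _ _ MeasurableSet.of_discrete]
  rfl

theorem bernoulli_toMeasure_real_false {p : ℝ≥0} (hp : p ≤ 1) :
    (PMF.bernoulli p hp).toMeasure.real {false} = 1 - p := by
  rw [measureReal_def, PMF.toMeasure_apply_singleton _ _ MeasurableSet.of_discrete]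
  change ((1 : ℝ≥0∞) - p).toReal = 1 - p
  rw [ENNReal.toReal_sub_of_le (by exact_mod_cast hp) ENNReal.one_ne_top]
  simp

instance (n : ℕ) (p : ℝ≥0) : IsProbabilityMeasure (erMeasure n p) := by
  unfold erMeasure
  infer_instance

theorem erMeasure_real_forall_imp {n : ℕ} {p : ℝ≥0} (hp : p ≤ 1) {u v : Fin n} (huv : u ≠ v)
    (S : Finset (Fin n)) (hu : u ∉ S) (hv : v ∉ S) :
    (erMeasure n p).real {ω | ∀ w ∈ S, ω s(u, w) = true → ω s(v, w) = true}
      = (1 - p * (1 - p)) ^ S.card := by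
  have hedge : ∀ w ∈ S, s(u, w) ≠ s(v, w) := fun w hw h => by
    rcases Sym2.eq_iff.mp h with ⟨h, -⟩ | ⟨rfl, -⟩
    exacts [huv h, hu hw]
  have hdisj : (S : Set (Fin n)).PairwiseDisjoint
      fun w => ({s(u, w), s(v, w)} : Set (Sym2 (Fin n))) := by
    intro w hw w' hw' hne
    simp only [Function.onFun, Set.disjoint_insert_left, Set.disjoint_insert_right,
      Set.disjoint_singleton, Set.mem_insert_iff, Set.mem_singleton_iff, not_or, ne_eq,
      Sym2.eq_iff]
    grind
  have hset : {ω : Sym2 (Fin n) → Bool | ∀ w ∈ S, ω s(u, w) = true → ω s(v, w) = true}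
      = ⋂ w ∈ S, {ω | ω s(u, w) = true → ω s(v, w) = true} := by
    ext ω
    simp
  rw [hset, measureReal_def, erMeasure, measure_pi_biInter_eq_prod_of_dependsOn _ S _ hdisj _
    fun w _ x y hxy => by simp [hxy _ (Set.mem_insert _ _), hxy _ (Set.mem_insert_of_mem _ rfl)],
    ENNReal.toReal_prod, ← Finset.prod_const]
  refine Finset.prod_congr rfl fun w hw => ?_
  rw [← measureReal_def, measureReal_pi_imp _ (hedge w hw), bernoulli_toMeasure_real_true,
    bernoulli_toMeasure_real_false, min_eq_left hp]

section Graph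

variable {V : Type*}

open Classical in
noncomputable def commonNonNeighbors [Fintype V] (G : SimpleGraph V) (u v : V) : Finset V :=
  {w | w ≠ u ∧ w ≠ v ∧ ¬G.Adj u w ∧ ¬G.Adj v w}

theorem mem_commonNonNeighbors [Fintype V] {G : SimpleGraph V} {u v w : V} :
    w ∈ commonNonNeighbors G u v ↔ w ≠ u ∧ w ≠ v ∧ ¬G.Adj u w ∧ ¬G.Adj v w := by
  simp [commonNonNeighbors]

theorem card_le_card_commonNonNeighbors_add [Fintype V] (G : SimpleGraph V) (u v : V) :
    Fintype.card V
      ≤ (commonNonNeighbors G u v).card + (ball G u 2).ncard + (ball G v 2).ncard := by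
  have hcover : Set.univ ⊆ ↑(commonNonNeighbors G u v) ∪ ball G u 2 ∪ ball G v 2 := by
    intro w _
    by_cases hwu : w = u
    · subst hwu
      exact Or.inl (Or.inr ⟨.nil, by simp⟩)
    by_cases hwv : w = v
    · subst hwv
      exact Or.inr ⟨.nil, by simp⟩
    by_cases hu : G.Adj u w
    · exact Or.inl (Or.inr ⟨hu.toWalk, by simp⟩)
    by_cases hv : G.Adj v w
    · exact Or.inr ⟨hv.toWalk, by simp⟩
    exact Or.inl (Or.inl (mem_commonNonNeighbors.mpr ⟨hwu, hwv, hu, hv⟩))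
  calc Fintype.card V = (Set.univ : Set V).ncard := by
        rw [Set.ncard_univ, Nat.card_eq_fintype_card]
    _ ≤ (↑(commonNonNeighbors G u v) ∪ ball G u 2 ∪ ball G v 2).ncard :=
        Set.ncard_le_ncard hcover
    _ ≤ _ := by grw [Set.ncard_union_le, Set.ncard_union_le, Set.ncard_coe_finset]

end Graph

theorem forall_imp_of_neighborSet_sdiff_eq_empty {n : ℕ} (G : SimpleGraph (Fin n))
    {H : SimpleGraph (Fin n)} {ω : Sym2 (Fin n) → Bool}
    (hH : ∀ x y, ¬G.Adj x y → (H.Adj x y ↔ (graphOfFn ω).Adj x y)) {u v : Fin n}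
    (h : H.neighborSet u \ (H.neighborSet v ∪ {v}) = ∅) :
    ∀ w ∈ commonNonNeighbors G u v, ω s(u, w) = true → ω s(v, w) = true := by
  intro w hw hω
  obtain ⟨hwu, hwv, hGu, hGv⟩ := mem_commonNonNeighbors.mp hw
  have hw_nbr : w ∈ H.neighborSet u := (hH u w hGu).mpr ⟨hwu.symm, hω⟩
  rcases Set.sdiff_eq_empty.mp h hw_nbr with hadj | rfl
  exacts [((hH v w hGv).mp hadj).2, absurd rfl hwv]

theorem one_sub_pow_le_exp_neg_mul {x : ℝ} (hx : x ≤ 1) (m : ℕ) :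
    (1 - x) ^ m ≤ Real.exp (-(x * m)) :=
  calc (1 - x) ^ m ≤ Real.exp (-x) ^ m :=
        pow_le_pow_left₀ (by linarith) (Real.one_sub_le_exp_neg x) m
    _ = Real.exp (-(x * m)) := by rw [← Real.exp_nat_mul]; ring_nf

theorem erMeasure_neighborSet_sdiff_eq_empty_le {n : ℕ} {p : ℝ≥0} (hp : p ≤ 1)
    (G : SimpleGraph (Fin n)) (H : (Sym2 (Fin n) → Bool) → SimpleGraph (Fin n))
    (hH : ∀ ω x y, ¬G.Adj x y → ((H ω).Adj x y ↔ (graphOfFn ω).Adj x y))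
    {u v : Fin n} (huv : u ≠ v) :
    (erMeasure n p {ω | (H ω).neighborSet u \ ((H ω).neighborSet v ∪ {v}) = ∅}).toReal
      ≤ Real.exp (-(p * (1 - p) * (n - (ball G u 2).ncard - (ball G v 2).ncard))) := by
  set S := commonNonNeighbors G u v
  have hp' : (p : ℝ) ≤ 1 := hp
  have hcard := card_le_card_commonNonNeighbors_add G u v
  rw [Fintype.card_fin] at hcard
  calc _ ≤ (erMeasure n p).real {ω | ∀ w ∈ S, ω s(u, w) = true → ω s(v, w) = true} :=
        measureReal_mono fun ω hω => forall_imp_of_neighborSet_sdiff_eq_empty G (hH ω) hω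
    _ = (1 - p * (1 - p)) ^ S.card :=
        erMeasure_real_forall_imp hp huv S (by simp [S, mem_commonNonNeighbors])
          (by simp [S, mem_commonNonNeighbors])
    _ ≤ Real.exp (-(p * (1 - p) * S.card)) := one_sub_pow_le_exp_neg_mul (by nlinarith) _
    _ ≤ _ := by
        gcongr
        have : (n : ℝ) ≤ S.card + (ball G u 2).ncard + (ball G v 2).ncard := by
          exact_mod_cast hcard
        linarith

theorem eventually_rpow_le_mul {lam c : ℝ} (hlam : lam < 1) (hc : 0 < c) :
    ∀ᶠ n : ℕ in atTop, (n : ℝ) ^ lam ≤ c * n := by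
  have hdecay := (tendsto_rpow_neg_atTop (sub_pos.mpr hlam)).comp tendsto_natCast_atTop_atTop
  filter_upwards [hdecay.eventually (eventually_le_nhds hc), eventually_gt_atTop 0]
    with n hn hpos
  have hn' : (0 : ℝ) < n := by exact_mod_cast hpos
  calc (n : ℝ) ^ lam = (n : ℝ) ^ (-(1 - lam)) * n := by
        rw [← Real.rpow_add_one hn'.ne']; ring_nf
    _ ≤ c * n := mul_le_mul_of_nonneg_right hn hn'.le

theorem isLittleO_exp_neg_of_eventually_three_log_le {E : ℕ → ℝ}
    (hE : ∀ᶠ n : ℕ in atTop, 3 * Real.log n ≤ E n) :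
    (fun n : ℕ => Real.exp (-E n)) =o[atTop] fun n : ℕ => (n : ℝ) ^ (-(2 : ℝ)) := by
  have hinv : (fun n : ℕ => (n : ℝ)⁻¹) =o[atTop] fun _ => (1 : ℝ) :=
    (isLittleO_one_iff ℝ).mpr (tendsto_inv_atTop_zero.comp tendsto_natCast_atTop_atTop)
  have hcube : (fun n : ℕ => (n : ℝ) ^ (-(2 : ℝ)) * (n : ℝ)⁻¹)
      =o[atTop] fun n : ℕ => (n : ℝ) ^ (-(2 : ℝ)) := by
    simpa using (isBigO_refl (fun n : ℕ => (n : ℝ) ^ (-(2 : ℝ))) atTop).mul_isLittleO hinv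
  refine IsBigO.trans_isLittleO (IsBigO.of_bound 1 ?_) hcube
  filter_upwards [hE, eventually_gt_atTop 0] with n hn hpos
  have hn' : (0 : ℝ) < n := by exact_mod_cast hpos
  rw [Real.norm_of_nonneg (Real.exp_pos _).le, one_mul, Real.norm_of_nonneg (by positivity)]
  calc Real.exp (-E n) ≤ Real.exp (-(3 * Real.log n)) := Real.exp_le_exp.mpr (by linarith)
    _ = (n : ℝ) ^ (-(2 : ℝ)) * (n : ℝ)⁻¹ := by
        rw [Real.rpow_def_of_pos hn', ← Real.exp_log (inv_pos.mpr hn'), Real.log_inv,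
          ← Real.exp_add]
        ring_nf

theorem eventually_three_log_le {lam : ℝ} (hlam : lam < 1) {p : ℕ → ℝ≥0}
    (hp0 : Tendsto (fun n : ℕ => (p n : ℝ)) atTop (nhds 0))
    (homega : (fun n : ℕ => Real.log n / n) =o[atTop] fun n : ℕ => (p n : ℝ)) :
    ∀ᶠ n : ℕ in atTop, 3 * Real.log n ≤ p n * (1 - p n) * (n - 2 * (n : ℝ) ^ lam) := by
  filter_upwards [homega.def (by norm_num : (0 : ℝ) < 1 / 12),
    hp0.eventually (eventually_le_nhds (by norm_num : (0 : ℝ) < 1 / 2)),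
    eventually_rpow_le_mul hlam (by norm_num : (0 : ℝ) < 1 / 4), eventually_gt_atTop 0]
    with n hlog hhalf hpow hpos
  have hn : (0 : ℝ) < n := by exact_mod_cast hpos
  have hq := (p n).coe_nonneg
  have hlog' : 12 * Real.log n ≤ p n * n := by
    have := (Real.le_norm_self _).trans hlog
    rw [Real.norm_of_nonneg hq, div_le_iff₀ hn] at this
    linarith
  calc 3 * Real.log n ≤ (p n / 2) * (n / 2) := by linarith
    _ ≤ p n * (1 - p n) * (n - 2 * (n : ℝ) ^ lam) :=
        mul_le_mul (by nlinarith) (by linarith) (by positivity) (by nlinarith)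

theorem exists_isLittleO_erMeasure_neighborSet_sdiff_eq_empty {lam : ℝ} (hlam : lam < 1)
    (G1 : ∀ n : ℕ, SimpleGraph (Fin n))
    (hG1 : ∀ n : ℕ, ∀ v : Fin n, ((ball (G1 n) v 2).ncard : ℝ) ≤ (n : ℝ) ^ lam)
    {p : ℕ → ℝ≥0} (hp1 : ∀ n, p n ≤ 1)
    (hp0 : Tendsto (fun n : ℕ => (p n : ℝ)) atTop (nhds 0))
    (homega : (fun n : ℕ => Real.log n / n) =o[atTop] fun n : ℕ => (p n : ℝ))
    (H : ∀ n : ℕ, (Sym2 (Fin n) → Bool) → SimpleGraph (Fin n))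
    (hH : ∀ n ω x y, ¬(G1 n).Adj x y → ((H n ω).Adj x y ↔ (graphOfFn ω).Adj x y)) :
    ∃ g : ℕ → ℝ, (g =o[atTop] fun n : ℕ => (n : ℝ) ^ (-(2 : ℝ))) ∧
      ∀ (n : ℕ) (u v : Fin n), u ≠ v →
        (erMeasure n (p n)
          {ω | (H n ω).neighborSet u \ ((H n ω).neighborSet v ∪ {v}) = ∅}).toReal ≤ g n := by
  refine ⟨fun n => Real.exp (-(p n * (1 - p n) * (n - 2 * (n : ℝ) ^ lam))),
    isLittleO_exp_neg_of_eventually_three_log_le (eventually_three_log_le hlam hp0 homega),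
    fun n u v huv => ?_⟩
  refine (erMeasure_neighborSet_sdiff_eq_empty_le (hp1 n) (G1 n) (H n) (hH n) huv).trans ?_
  have hq : 0 ≤ (p n : ℝ) * (1 - p n) :=
    mul_nonneg (p n).coe_nonneg (sub_nonneg.mpr (by exact_mod_cast hp1 n))
  have := hG1 n u
  have := hG1 n v
  exact Real.exp_le_exp.mpr (neg_le_neg (mul_le_mul_of_nonneg_left (by linarith) hq))

theorem neighborhood_difference_nonempty_general
    (lam : ℝ) (hlam1 : lam < 1)
    (G1 : ∀ n : ℕ, SimpleGraph (Fin n))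
    (hG1 : ∀ n : ℕ, ∀ v : Fin n, ((ball (G1 n) v 2).ncard : ℝ) ≤ (n : ℝ) ^ lam)
    (p : ℕ → ℝ≥0) (hp1 : ∀ n, p n ≤ 1)
    (hp0 : Tendsto (fun n : ℕ => (p n : ℝ)) atTop (nhds 0))
    (homega : (fun n : ℕ => Real.log n / n) =o[atTop] fun n : ℕ => (p n : ℝ)) :
    (∃ g : ℕ → ℝ, (g =o[atTop] fun n : ℕ => (n : ℝ) ^ (-(2 : ℝ))) ∧
      ∀ (n : ℕ) (u v : Fin n), u ≠ v →
        (erMeasure n (p n)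
          {ω | (G1 n ⊔ graphOfFn ω).neighborSet u \
              ((G1 n ⊔ graphOfFn ω).neighborSet v ∪ {v}) = ∅}).toReal ≤ g n) ∧
    (∃ g : ℕ → ℝ, (g =o[atTop] fun n : ℕ => (n : ℝ) ^ (-(2 : ℝ))) ∧
      ∀ (n : ℕ) (u v : Fin n), u ≠ v →
        (erMeasure n (p n)
          {ω | (sgXor (G1 n) (graphOfFn ω)).neighborSet u \
              ((sgXor (G1 n) (graphOfFn ω)).neighborSet v ∪ {v}) = ∅}).toReal ≤ g n) :=
  ⟨exists_isLittleO_erMeasure_neighborSet_sdiff_eq_empty hlam1 G1 hG1 hp1 hp0 homega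
      (fun n ω => G1 n ⊔ graphOfFn ω) fun n ω x y hG => by simp [hG],
    exists_isLittleO_erMeasure_neighborSet_sdiff_eq_empty hlam1 G1 hG1 hp1 hp0 homega
      (fun n ω => sgXor (G1 n) (graphOfFn ω)) fun n ω x y hG => by simp [sgXor, hG]⟩

/-- Let `λ ∈ (0,1)`. For each `n` let `G1 n` be a graph on `[n]` all of
whose 2-neighborhoods have at most `n^λ` vertices, and let `G2 ~ G(n, pₙ)` with `pₙ → 0`
and `pₙ = ω(log(n)/n)`. Then, uniformly over pairs of distinct vertices `u, v`, the
probability that `N(u) \ (N(v) ∪ {v}) = ∅` (neighborhoods in the union of `G1` and `G2`)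
is `o(n^{−2})`; the same holds for the XOR of `G1` and `G2`. -/
theorem neighborhood_difference_nonempty
    (lam : ℝ) (hlam0 : 0 < lam) (hlam1 : lam < 1)
    (G1 : ∀ n : ℕ, SimpleGraph (Fin n))
    (hG1 : ∀ n : ℕ, ∀ v : Fin n, ((ball (G1 n) v 2).ncard : ℝ) ≤ (n : ℝ) ^ lam)
    (p : ℕ → ℝ≥0) (hp1 : ∀ n, p n ≤ 1)
    (hp0 : Tendsto (fun n : ℕ => (p n : ℝ)) atTop (nhds 0))
    (homega : (fun n : ℕ => Real.log n / n) =o[atTop] fun n : ℕ => (p n : ℝ)) :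
    (∃ g : ℕ → ℝ, (g =o[atTop] fun n : ℕ => (n : ℝ) ^ (-(2 : ℝ))) ∧
      ∀ (n : ℕ) (u v : Fin n), u ≠ v →
        (erMeasure n (p n)
          {ω | (G1 n ⊔ graphOfFn ω).neighborSet u \
              ((G1 n ⊔ graphOfFn ω).neighborSet v ∪ {v}) = ∅}).toReal ≤ g n) ∧
    (∃ g : ℕ → ℝ, (g =o[atTop] fun n : ℕ => (n : ℝ) ^ (-(2 : ℝ))) ∧
      ∀ (n : ℕ) (u v : Fin n), u ≠ v →
        (erMeasure n (p n)
          {ω | (sgXor (G1 n) (graphOfFn ω)).neighborSet u \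
              ((sgXor (G1 n) (graphOfFn ω)).neighborSet v ∪ {v}) = ∅}).toReal ≤ g n) :=
  neighborhood_difference_nonempty_general lam hlam1 G1 hG1 p hp1 hp0 homega
end
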